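/- arXiv:1711.08043 — 7 statements merged into one kernel-verified Lean document; each statement's English description precedes it below -/
import Mathlib

section
/- Let E ⊆ ℝ^d and let 𝒢 be a linear operator on polynomials whose action on a polynomial f is 𝒢f(x) = (1/2)tr(a(x)∇²f(x)) + b(x)ᵀ∇f(x) + ∫(f(x+ξ)−f(x)−ξᵀ∇f(x))ν(x,dξ). If b restricted to E is a polynomial of degree ≤ 1, a(x) + ∫ξξᵀν(x,dξ) restricted to E has entries that are polynomials of degree ≤ 2, and for every multi-index α with |α| ≥ 3 the function x ↦ ∫ξ^α ν(x,dξ) restricted to E is a polynomial of degree ≤ |α|, then 𝒢 maps polynomials of degree ≤ n on E to polynomials of degree ≤ n on E, for every n. -/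
/-!
Expand `p(x + ξ) = ∑_α c_α(x) ξ^α` (`taylorShift`), where `c_α` has degree at most
`deg p - |α|`. In the jump integrand the terms with `|α| ≤ 1` cancel, and the terms with
`|α| = 2` are `½ ∑ ∂ᵢ∂ⱼp(x) ξᵢξⱼ`; integrated, they join the diffusion term into
`½ ∑ (aᵢⱼ + ∫ ξᵢξⱼ dν) ∂ᵢ∂ⱼp`, a polynomial of degree `≤ 2` times one of degree `≤ deg p - 2`
(just as `bᵢ ∂ᵢp` is one of degree `≤ 1` times one of degree `≤ deg p - 1`).
Every term with `|α| ≥ 3` contributes `c_α(x) ∫ ξ^α dν`, of degree `≤ (deg p - |α|) + |α|`.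
-/

open MeasureTheory MvPolynomial Filter Set

noncomputable section

/-- The jump-diffusion operator
`𝒢 f(x) = ½ tr(a(x)∇²f(x)) + b(x)ᵀ∇f(x) + ∫ (f(x+ξ) − f(x) − ξᵀ∇f(x)) ν(x,dξ)`. -/
def jdOp {d : ℕ} (a : (Fin d → ℝ) → Matrix (Fin d) (Fin d) ℝ)
    (b : (Fin d → ℝ) → Fin d → ℝ) (ν : (Fin d → ℝ) → Measure (Fin d → ℝ))
    (f : (Fin d → ℝ) → ℝ) (x : Fin d → ℝ) : ℝ :=
  (1 / 2) * ∑ i, ∑ j, a x i j *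
      fderiv ℝ (fun y => fderiv ℝ f y (Pi.single j 1)) x (Pi.single i 1)
    + ∑ i, b x i * fderiv ℝ f x (Pi.single i 1)
    + ∫ ξ, (f (x + ξ) - f x - ∑ i, ξ i * fderiv ℝ f x (Pi.single i 1)) ∂(ν x)

namespace MvPolynomial

variable {σ τ R : Type*} [CommSemiring R]

theorem homogeneousComponent_zero_mul_X (φ : MvPolynomial σ R) (i : σ) :
    homogeneousComponent 0 (φ * X i) = 0 := by
  classical
  simp [coeff_mul_X']

theorem homogeneousComponent_succ_mul_X (n : ℕ) (φ : MvPolynomial σ R) (i : σ) :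
    homogeneousComponent (n + 1) (φ * X i) = homogeneousComponent n φ * X i := by
  classical
  ext d
  rw [coeff_homogeneousComponent, coeff_mul_X', coeff_mul_X', coeff_homogeneousComponent]
  by_cases hi : i ∈ d.support
  · have hd : d.degree = (d - Finsupp.single i 1).degree + 1 := by
      conv_lhs => rw [← Finsupp.sub_add_single_one_cancel (Finsupp.mem_support_iff.mp hi)]
      rw [map_add, Finsupp.degree_single]
    simp only [hi, if_true, hd, Nat.add_right_cancel_iff]
  · simp [hi]

theorem eval₂_eq_sum_homogeneousComponent_add [Fintype σ] {S : Type*} [CommSemiring S]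
    (f : R →+* S) (ξ : σ → S) (φ : MvPolynomial σ R) (n : ℕ) :
    eval₂ f ξ φ = ∑ k ∈ Finset.range n, eval₂ f ξ (homogeneousComponent k φ) +
      ∑ α ∈ φ.support with n ≤ α.degree, f (coeff α φ) * ∏ i, ξ i ^ α i := by
  induction n with
  | zero => simp [eval₂_eq']
  | succ n ih =>
    have hcomp : eval₂ f ξ (homogeneousComponent n φ) =
        ∑ α ∈ φ.support with α.degree = n, f (coeff α φ) * ∏ i, ξ i ^ α i := by
      simp [homogeneousComponent_apply, eval₂_monomial, Finsupp.prod_fintype]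
    rw [ih, Finset.sum_range_succ, hcomp, add_assoc, ← Finset.sum_union]
    · congr 2
      ext α
      simp only [Finset.mem_union, Finset.mem_filter, ← and_or_left]
      exact and_congr_right fun _ => by omega
    · exact Finset.disjoint_filter.mpr fun _ _ h => by omega

theorem pderiv_mul_X [DecidableEq σ] (p : MvPolynomial σ R) (i k : σ) :
    pderiv i (p * X k) = pderiv i p * X k + if i = k then p else 0 := by
  rw [pderiv_mul, pderiv_X, Pi.single_apply]
  split_ifs <;> simp_all

theorem degree_le_totalDegree {p : MvPolynomial σ R} {s : σ →₀ ℕ} (h : s ∈ p.support) :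
    s.degree ≤ p.totalDegree :=
  le_totalDegree h

theorem totalDegree_pderiv_lt {p : MvPolynomial σ R} {i : σ} (h : pderiv i p ≠ 0) :
    (pderiv i p).totalDegree < p.totalDegree := by
  have key : ∀ m ∈ (pderiv i p).support, m.degree + 1 ≤ p.totalDegree := fun m hm => by
    have hc : coeff (m + Finsupp.single i 1) p ≠ 0 := by
      intro h0
      rw [mem_support_iff, coeff_pderiv, h0, zero_mul] at hm
      exact hm rfl
    have := degree_le_totalDegree (mem_support_iff.mpr hc)
    rwa [map_add, Finsupp.degree_single] at this
  obtain ⟨m, hm⟩ := support_nonempty.mpr h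
  have hle : (pderiv i p).totalDegree ≤ p.totalDegree - 1 :=
    Finset.sup_le fun m hm => Nat.le_sub_of_add_le (key m hm)
  have := key m hm
  omega

theorem totalDegree_mul_pderiv_le {p q : MvPolynomial σ R} (hq : q.totalDegree ≤ 1) (i : σ) :
    (q * pderiv i p).totalDegree ≤ p.totalDegree := by
  by_cases h : pderiv i p = 0
  · simp [h]
  have := totalDegree_pderiv_lt h
  have := totalDegree_mul q (pderiv i p)
  omega

theorem totalDegree_mul_pderiv_pderiv_le {p q : MvPolynomial σ R} (hq : q.totalDegree ≤ 2)
    (i j : σ) : (q * pderiv i (pderiv j p)).totalDegree ≤ p.totalDegree := by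
  by_cases h : pderiv i (pderiv j p) = 0
  · simp [h]
  have hj : pderiv j p ≠ 0 := fun hj => h (by rw [hj, map_zero])
  have := totalDegree_pderiv_lt h
  have := totalDegree_pderiv_lt hj
  have := totalDegree_mul q (pderiv i (pderiv j p))
  omega

def JointTotalDegreeLE (n : ℕ) (q : MvPolynomial σ (MvPolynomial τ R)) : Prop :=
  ∀ α β, coeff β (coeff α q) ≠ 0 → α.degree + β.degree ≤ n

theorem jointTotalDegreeLE_C (p : MvPolynomial τ R) :
    JointTotalDegreeLE (σ := σ) p.totalDegree (C p) := by
  classical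
  intro α β hαβ
  rw [coeff_C] at hαβ
  split_ifs at hαβ with hα
  · subst hα
    simpa using degree_le_totalDegree (mem_support_iff.mpr hαβ)
  · exact absurd (coeff_zero β) hαβ

theorem jointTotalDegreeLE_X (i : σ) : JointTotalDegreeLE (R := R) (τ := τ) 1 (X i) := by
  classical
  intro α β hαβ
  rw [coeff_X] at hαβ
  split_ifs at hαβ with hα
  · subst hα
    rw [coeff_one] at hαβ
    split_ifs at hαβ with hβ
    · simp [← hβ]
    · exact absurd rfl hαβ
  · exact absurd (coeff_zero β) hαβ

namespace JointTotalDegreeLE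

variable {m n : ℕ} {q q₁ q₂ : MvPolynomial σ (MvPolynomial τ R)}

theorem mono (h : JointTotalDegreeLE m q) (hmn : m ≤ n) : JointTotalDegreeLE n q :=
  fun α β hαβ => (h α β hαβ).trans hmn

theorem add (h₁ : JointTotalDegreeLE n q₁) (h₂ : JointTotalDegreeLE n q₂) :
    JointTotalDegreeLE n (q₁ + q₂) := by
  intro α β hαβ
  rw [coeff_add, coeff_add] at hαβ
  by_cases h : coeff β (coeff α q₁) = 0
  · rw [h, zero_add] at hαβ
    exact h₂ α β hαβ
  · exact h₁ α β h

theorem sum {ι : Type*} (s : Finset ι) {f : ι → MvPolynomial σ (MvPolynomial τ R)}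
    (hf : ∀ k ∈ s, JointTotalDegreeLE n (f k)) : JointTotalDegreeLE n (∑ k ∈ s, f k) := by
  intro α β hαβ
  rw [coeff_sum, coeff_sum] at hαβ
  obtain ⟨k, hk, hne⟩ := Finset.exists_ne_zero_of_sum_ne_zero hαβ
  exact hf k hk α β hne

theorem mul (h₁ : JointTotalDegreeLE m q₁) (h₂ : JointTotalDegreeLE n q₂) :
    JointTotalDegreeLE (m + n) (q₁ * q₂) := by
  classical
  intro α β hαβ
  rw [coeff_mul, coeff_sum] at hαβ
  obtain ⟨a, ha, hne⟩ := Finset.exists_ne_zero_of_sum_ne_zero hαβ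
  rw [coeff_mul] at hne
  obtain ⟨b, hb, hne⟩ := Finset.exists_ne_zero_of_sum_ne_zero hne
  rw [Finset.HasAntidiagonal.mem_antidiagonal] at ha hb
  have h₁ := h₁ a.1 b.1 (left_ne_zero_of_mul hne)
  have h₂ := h₂ a.2 b.2 (right_ne_zero_of_mul hne)
  rw [← ha, ← hb, map_add, map_add]
  omega

theorem pow (h : JointTotalDegreeLE n q) (k : ℕ) : JointTotalDegreeLE (k * n) (q ^ k) := by
  induction k with
  | zero => simpa using jointTotalDegreeLE_C (σ := σ) (1 : MvPolynomial τ R)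
  | succ k ih => simpa [pow_succ, add_mul] using ih.mul h

theorem prod {ι : Type*} (s : Finset ι) {f : ι → MvPolynomial σ (MvPolynomial τ R)}
    {n : ι → ℕ} (hf : ∀ k ∈ s, JointTotalDegreeLE (n k) (f k)) :
    JointTotalDegreeLE (∑ k ∈ s, n k) (∏ k ∈ s, f k) := by
  classical
  induction s using Finset.induction_on with
  | empty => simpa using jointTotalDegreeLE_C (σ := σ) (1 : MvPolynomial τ R)
  | insert k s hk ih =>
    rw [Finset.sum_insert hk, Finset.prod_insert hk]
    exact (hf k (Finset.mem_insert_self k s)).mul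
      (ih fun k' hk' => hf k' (Finset.mem_insert_of_mem hk'))

theorem degree_add_totalDegree_coeff_le (h : JointTotalDegreeLE n q) {α : σ →₀ ℕ}
    (hα : α ∈ q.support) : α.degree + (coeff α q).totalDegree ≤ n := by
  obtain ⟨β, hβ⟩ := support_nonempty.mpr (mem_support_iff.mp hα)
  have hle : (coeff α q).totalDegree ≤ n - α.degree :=
    Finset.sup_le fun β' hβ' => Nat.le_sub_of_add_le' (h α β' (mem_support_iff.mp hβ'))
  have := h α β (mem_support_iff.mp hβ)
  omega

end JointTotalDegreeLE

/-- `p(X + ξ)`, as a polynomial in the variables `ξ` whose coefficients are polynomials in `X`. -/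
def taylorShift (p : MvPolynomial σ R) : MvPolynomial σ (MvPolynomial σ R) :=
  aeval (fun i => X i + C (X i)) p

theorem taylorShift_C (r : R) : taylorShift (σ := σ) (C r) = C (C r) := by
  simp [taylorShift, algebraMap_eq]

theorem taylorShift_add (p q : MvPolynomial σ R) :
    taylorShift (p + q) = taylorShift p + taylorShift q :=
  map_add _ p q

theorem taylorShift_mul_X (p : MvPolynomial σ R) (i : σ) :
    taylorShift (p * X i) = taylorShift p * X i + C (X i) * taylorShift p := by
  simp only [taylorShift, map_mul, aeval_X]
  ring

theorem eval₂_eval_taylorShift (x ξ : σ → R) (p : MvPolynomial σ R) :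
    eval₂ (eval x) ξ (taylorShift p) = eval (x + ξ) p := by
  induction p using MvPolynomial.induction_on with
  | C r => simp [taylorShift_C]
  | add p q hp hq => simp [taylorShift_add, hp, hq]
  | mul_X p i hp => simp [taylorShift_mul_X, hp]; ring

theorem jointTotalDegreeLE_taylorShift [Nontrivial R] (p : MvPolynomial σ R) :
    JointTotalDegreeLE p.totalDegree (taylorShift p) := by
  have hshift (i : σ) : JointTotalDegreeLE 1 (X i + C (X i) : MvPolynomial σ (MvPolynomial σ R)) :=
    (jointTotalDegreeLE_X i).add (by simpa using jointTotalDegreeLE_C (X i : MvPolynomial σ R))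
  rw [taylorShift, p.as_sum, map_sum]
  refine JointTotalDegreeLE.sum _ fun β hβ => ?_
  rw [aeval_monomial, algebraMap_apply, algebraMap_eq, Finsupp.prod]
  refine ((jointTotalDegreeLE_C _).mul
    (JointTotalDegreeLE.prod _ fun i _ => (hshift i).pow (β i))).mono ?_
  simpa [← Finsupp.degree_apply] using degree_le_totalDegree hβ

theorem homogeneousComponent_zero_taylorShift (p : MvPolynomial σ R) :
    homogeneousComponent 0 (taylorShift p) = C p := by
  induction p using MvPolynomial.induction_on with
  | C r => simp [taylorShift_C]
  | add p q hp hq => rw [taylorShift_add, map_add, hp, hq, map_add]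
  | mul_X p i hp =>
    rw [taylorShift_mul_X, map_add, homogeneousComponent_zero_mul_X, homogeneousComponent_C_mul,
      hp, zero_add, C_mul, mul_comm]

theorem homogeneousComponent_one_taylorShift [Fintype σ] (p : MvPolynomial σ R) :
    homogeneousComponent 1 (taylorShift p) = ∑ i, C (pderiv i p) * X i := by
  classical
  induction p using MvPolynomial.induction_on with
  | C r => simp [taylorShift_C, homogeneousComponent_eq_zero]
  | add p q hp hq => simp [taylorShift_add, hp, hq, add_mul, Finset.sum_add_distrib]
  | mul_X p k hp =>
    rw [taylorShift_mul_X, map_add, homogeneousComponent_succ_mul_X, homogeneousComponent_C_mul,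
      hp, homogeneousComponent_zero_taylorShift]
    simp only [pderiv_mul_X, map_add, apply_ite C, C_0, ite_mul, zero_mul, add_mul,
      Finset.sum_add_distrib, Finset.sum_ite_eq', Finset.mem_univ, if_true, Finset.mul_sum, C_mul]
    rw [add_comm]
    congr 1
    exact Finset.sum_congr rfl fun _ _ => by ring

theorem two_mul_homogeneousComponent_two_taylorShift [Fintype σ] (p : MvPolynomial σ R) :
    2 * homogeneousComponent 2 (taylorShift p) =
      ∑ i, ∑ j, C (pderiv i (pderiv j p)) * X i * X j := by
  classical
  induction p using MvPolynomial.induction_on with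
  | C r => simp [taylorShift_C, homogeneousComponent_eq_zero]
  | add p q hp hq =>
    simp only [taylorShift_add, map_add, mul_add, hp, hq, add_mul, Finset.sum_add_distrib]
  | mul_X p k hp =>
    rw [taylorShift_mul_X, map_add, homogeneousComponent_succ_mul_X, homogeneousComponent_C_mul,
      homogeneousComponent_one_taylorShift, mul_add, ← mul_assoc, mul_left_comm _ (C _), hp]
    simp only [pderiv_mul_X, map_add, apply_ite (pderiv _), map_zero, apply_ite C, ite_mul,
      zero_mul, add_mul, Finset.sum_add_distrib, Finset.sum_ite_irrel, Finset.sum_const_zero,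
      Finset.sum_ite_eq', Finset.mem_univ, if_true, Finset.mul_sum, Finset.sum_mul, C_mul]
    ring_nf
    rw [add_comm, Finset.sum_mul]
    refine congrArg (_ + ·) ?_
    exact Finset.sum_congr rfl fun _ _ => by ring

variable [Fintype σ]

theorem eval_add_eq_taylor (p : MvPolynomial σ ℝ) (x ξ : σ → ℝ) :
    eval (x + ξ) p = eval x p + ∑ i, eval x (pderiv i p) * ξ i +
      1 / 2 * ∑ i, ∑ j, eval x (pderiv i (pderiv j p)) * (ξ i * ξ j) +
      ∑ α ∈ (taylorShift p).support with 3 ≤ α.degree,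
        eval x (coeff α (taylorShift p)) * ∏ i, ξ i ^ α i := by
  have h2 := congrArg (eval₂ (eval x) ξ) (two_mul_homogeneousComponent_two_taylorShift p)
  rw [← eval₂_eval_taylorShift x ξ p, eval₂_eq_sum_homogeneousComponent_add _ _ _ 3]
  simp only [Finset.sum_range_succ, Finset.range_zero, Finset.sum_empty, zero_add,
    homogeneousComponent_zero_taylorShift, homogeneousComponent_one_taylorShift]
  simp only [eval₂_mul, eval₂_ofNat, eval₂_sum, eval₂_C, eval₂_X, mul_assoc] at h2 ⊢
  linarith

theorem hasFDerivAt_eval (p : MvPolynomial σ ℝ) (x : σ → ℝ) :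
    HasFDerivAt (fun y => eval y p)
      (∑ i, eval x (pderiv i p) • (ContinuousLinearMap.proj i : (σ → ℝ) →L[ℝ] ℝ)) x := by
  classical
  induction p using MvPolynomial.induction_on with
  | C r => simpa using hasFDerivAt_const (𝕜 := ℝ) r x
  | add p q hp hq =>
    simp only [map_add, add_smul, Finset.sum_add_distrib]
    exact hp.add hq
  | mul_X p k hp =>
    simp only [eval_mul, eval_X]
    refine (hp.mul (hasFDerivAt_apply k x)).congr_fderiv ?_
    ext v
    simp [Pi.single_apply, apply_ite (eval x), mul_add, mul_ite, Finset.sum_add_distrib,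
      Finset.mul_sum, mul_comm, mul_left_comm]

theorem fderiv_eval_apply_single [DecidableEq σ] (p : MvPolynomial σ ℝ) (x : σ → ℝ) (i : σ) :
    fderiv ℝ (fun y => eval y p) x (Pi.single i 1) = eval x (pderiv i p) := by
  simp [(hasFDerivAt_eval p x).fderiv, Pi.single_apply]

end MvPolynomial

section Moments

variable {σ : Type*} [Fintype σ] {μ : Measure (σ → ℝ)}

theorem integrable_prod_pow (α : σ → ℕ) (h : Integrable (fun ξ => ‖ξ‖ ^ ∑ i, α i) μ) :
    Integrable (fun ξ : σ → ℝ => ∏ i, ξ i ^ α i) μ := by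
  refine h.mono' (by fun_prop : Continuous _).aestronglyMeasurable (ae_of_all _ fun ξ => ?_)
  rw [norm_prod, ← Finset.prod_pow_eq_pow_sum]
  exact Finset.prod_le_prod (fun _ _ => norm_nonneg _) fun i _ => by
    rw [norm_pow]
    exact pow_le_pow_left₀ (norm_nonneg _) (norm_le_pi_norm ξ i) _

theorem integrable_apply_mul_apply (h : Integrable (fun ξ => ‖ξ‖ ^ 2) μ) (i j : σ) :
    Integrable (fun ξ : σ → ℝ => ξ i * ξ j) μ := by
  refine h.mono' (by fun_prop : Continuous _).aestronglyMeasurable (ae_of_all _ fun ξ => ?_)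
  rw [norm_mul, sq]
  exact mul_le_mul (norm_le_pi_norm ξ i) (norm_le_pi_norm ξ j) (norm_nonneg _) (norm_nonneg _)

theorem integral_eval_add_sub_sub_eq (hmom : ∀ n, 2 ≤ n → Integrable (fun ξ => ‖ξ‖ ^ n) μ)
    (p : MvPolynomial σ ℝ) (x : σ → ℝ) :
    ∫ ξ, (eval (x + ξ) p - eval x p - ∑ i, ξ i * eval x (pderiv i p)) ∂μ =
      1 / 2 * ∑ i, ∑ j, eval x (pderiv i (pderiv j p)) * ∫ ξ, ξ i * ξ j ∂μ +
      ∑ α ∈ (taylorShift p).support with 3 ≤ α.degree,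
        eval x (coeff α (taylorShift p)) * ∫ ξ, ∏ i, ξ i ^ α i ∂μ := by
  have hpair := integrable_apply_mul_apply (hmom 2 le_rfl)
  have hmonomial : ∀ α ∈ (taylorShift p).support.filter (3 ≤ ·.degree),
      Integrable (fun ξ : σ → ℝ => ∏ i, ξ i ^ α i) μ := fun α hα => by
    refine integrable_prod_pow _ (hmom _ ?_)
    rw [← Finsupp.degree_eq_sum]
    exact le_trans (by norm_num) (Finset.mem_filter.mp hα).2
  have hT : (fun ξ => eval (x + ξ) p - eval x p - ∑ i, ξ i * eval x (pderiv i p)) = fun ξ =>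
      1 / 2 * ∑ i, ∑ j, eval x (pderiv i (pderiv j p)) * (ξ i * ξ j) +
      ∑ α ∈ (taylorShift p).support with 3 ≤ α.degree,
        eval x (coeff α (taylorShift p)) * ∏ i, ξ i ^ α i := by
    ext ξ
    rw [eval_add_eq_taylor, Finset.sum_congr rfl fun i _ => mul_comm (ξ i) (eval x (pderiv i p))]
    ring
  rw [hT, integral_add, integral_const_mul, integral_finsetSum, integral_finsetSum]
  · simp only [integral_const_mul, integral_finsetSum _ fun j _ => (hpair _ j).const_mul _]
  · exact fun α hα => (hmonomial α hα).const_mul _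
  · exact fun i _ => integrable_finsetSum _ fun j _ => (hpair i j).const_mul _
  · exact (integrable_finsetSum _ fun i _ => integrable_finsetSum _ fun j _ =>
      (hpair i j).const_mul _).const_mul _
  · exact integrable_finsetSum _ fun α hα => (hmonomial α hα).const_mul _

end Moments

/-- Represents `jdOp a b ν` applied to `p` on a set where `A i j`, `B i` and `M α` represent
`a i j + ∫ ξ i ξ j dν`, `b i` and `∫ ξ^α dν`. -/
def jdOpPoly {σ : Type*} [Fintype σ] (A : σ → σ → MvPolynomial σ ℝ) (B : σ → MvPolynomial σ ℝ)
    (M : (σ → ℕ) → MvPolynomial σ ℝ) (p : MvPolynomial σ ℝ) : MvPolynomial σ ℝ :=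
  C (1 / 2) * ∑ i, ∑ j, A i j * pderiv i (pderiv j p) + ∑ i, B i * pderiv i p +
    ∑ α ∈ (taylorShift p).support with 3 ≤ α.degree, coeff α (taylorShift p) * M α

theorem totalDegree_jdOpPoly_le {σ : Type*} [Fintype σ] {A : σ → σ → MvPolynomial σ ℝ}
    {B : σ → MvPolynomial σ ℝ} {M : (σ → ℕ) → MvPolynomial σ ℝ}
    (hA : ∀ i j, (A i j).totalDegree ≤ 2) (hB : ∀ i, (B i).totalDegree ≤ 1)
    (hM : ∀ α : σ → ℕ, 3 ≤ ∑ i, α i → (M α).totalDegree ≤ ∑ i, α i) (p : MvPolynomial σ ℝ) :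
    (jdOpPoly A B M p).totalDegree ≤ p.totalDegree := by
  refine (totalDegree_add _ _).trans (max_le ((totalDegree_add _ _).trans (max_le ?_ ?_)) ?_)
  · refine (totalDegree_mul _ _).trans ?_
    rw [totalDegree_C, zero_add]
    exact totalDegree_finsetSum_le fun i _ => totalDegree_finsetSum_le fun j _ =>
      totalDegree_mul_pderiv_pderiv_le (hA i j) i j
  · exact totalDegree_finsetSum_le fun i _ => totalDegree_mul_pderiv_le (hB i) i
  · refine totalDegree_finsetSum_le fun α hα => ?_
    obtain ⟨hsupp, hα3⟩ := Finset.mem_filter.mp hα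
    rw [Finsupp.degree_eq_sum] at hα3
    have hcoeff := (jointTotalDegreeLE_taylorShift p).degree_add_totalDegree_coeff_le hsupp
    rw [Finsupp.degree_eq_sum] at hcoeff
    have := hM α hα3
    have := totalDegree_mul (coeff α (taylorShift p)) (M α)
    omega

theorem eval_jdOpPoly {d : ℕ} {a : (Fin d → ℝ) → Matrix (Fin d) (Fin d) ℝ}
    {b : (Fin d → ℝ) → Fin d → ℝ} {ν : (Fin d → ℝ) → Measure (Fin d → ℝ)}
    {A : Fin d → Fin d → MvPolynomial (Fin d) ℝ} {B : Fin d → MvPolynomial (Fin d) ℝ}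
    {M : (Fin d → ℕ) → MvPolynomial (Fin d) ℝ} {x : Fin d → ℝ}
    (hmom : ∀ n, 2 ≤ n → Integrable (fun ξ => ‖ξ‖ ^ n) (ν x))
    (hA : ∀ i j, eval x (A i j) = a x i j + ∫ ξ, ξ i * ξ j ∂(ν x))
    (hB : ∀ i, eval x (B i) = b x i)
    (hM : ∀ α : Fin d → ℕ, 3 ≤ ∑ i, α i → eval x (M α) = ∫ ξ, ∏ i, ξ i ^ α i ∂(ν x))
    (p : MvPolynomial (Fin d) ℝ) :
    eval x (jdOpPoly A B M p) = jdOp a b ν (fun y => eval y p) x := by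
  have hmoments : ∀ α ∈ (taylorShift p).support.filter (3 ≤ ·.degree),
      eval x (coeff α (taylorShift p)) * eval x (M α) =
        eval x (coeff α (taylorShift p)) * ∫ ξ, ∏ i, ξ i ^ α i ∂(ν x) := fun α hα => by
    rw [hM α (Finsupp.degree_eq_sum α ▸ (Finset.mem_filter.mp hα).2)]
  simp only [jdOp, jdOpPoly, fderiv_eval_apply_single, integral_eval_add_sub_sub_eq hmom,
    eval_add, eval_mul, eval_C, map_sum, hA, hB, Finset.sum_congr rfl hmoments]
  simp only [add_mul, Finset.sum_add_distrib, mul_comm (∫ ξ, _ ∂(ν x))]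
  ring

theorem stmt0_general {d : ℕ} (E : Set (Fin d → ℝ))
    (a : (Fin d → ℝ) → Matrix (Fin d) (Fin d) ℝ)
    (b : (Fin d → ℝ) → Fin d → ℝ)
    (ν : (Fin d → ℝ) → Measure (Fin d → ℝ))
    (hmom : ∀ x ∈ E, ∀ n : ℕ, 2 ≤ n → Integrable (fun ξ => ‖ξ‖ ^ n) (ν x))
    (hb : ∀ i, ∃ q : MvPolynomial (Fin d) ℝ, q.totalDegree ≤ 1 ∧
      ∀ x ∈ E, MvPolynomial.eval x q = b x i)
    (ha : ∀ i j, ∃ q : MvPolynomial (Fin d) ℝ, q.totalDegree ≤ 2 ∧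
      ∀ x ∈ E, MvPolynomial.eval x q = a x i j + ∫ ξ, ξ i * ξ j ∂(ν x))
    (hnu : ∀ α : Fin d → ℕ, 3 ≤ ∑ i, α i →
      ∃ q : MvPolynomial (Fin d) ℝ, q.totalDegree ≤ ∑ i, α i ∧
        ∀ x ∈ E, MvPolynomial.eval x q = ∫ ξ, ∏ i, ξ i ^ α i ∂(ν x)) :
    ∀ n : ℕ, ∀ p : MvPolynomial (Fin d) ℝ, p.totalDegree ≤ n →
      ∃ r : MvPolynomial (Fin d) ℝ, r.totalDegree ≤ n ∧
        ∀ x ∈ E, MvPolynomial.eval x r =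
          jdOp a b ν (fun y => MvPolynomial.eval y p) x := by
  intro n p hp
  choose B hB_deg hB_eval using hb
  choose A hA_deg hA_eval using ha
  choose! M hM_deg hM_eval using hnu
  exact ⟨jdOpPoly A B M p, (totalDegree_jdOpPoly_le hA_deg hB_deg hM_deg p).trans hp,
    fun x hx => eval_jdOpPoly (hmom x hx) (fun i j => hA_eval i j x hx)
      (fun i => hB_eval i x hx) (fun α hα => hM_eval α hα x hx) p⟩

/-- if `b ∈ Pol₁(E)`, `a + ∫ξξᵀν ∈ Pol₂(E)` entrywise, and
`∫ ξ^α ν(·,dξ) ∈ Pol_{|α|}(E)` for all `|α| ≥ 3`, then `𝒢` maps `Pol_n(E)` to itself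
for every `n`. -/
theorem stmt0 {d : ℕ} (E : Set (Fin d → ℝ))
    (a : (Fin d → ℝ) → Matrix (Fin d) (Fin d) ℝ)
    (b : (Fin d → ℝ) → Fin d → ℝ)
    (ν : (Fin d → ℝ) → Measure (Fin d → ℝ))
    (hpsd : ∀ x, (a x).PosSemidef)
    (hν0 : ∀ x, ν x ({0} : Set (Fin d → ℝ)) = 0)
    (hmom : ∀ x ∈ E, ∀ n : ℕ, 2 ≤ n → Integrable (fun ξ => ‖ξ‖ ^ n) (ν x))
    (hb : ∀ i, ∃ q : MvPolynomial (Fin d) ℝ, q.totalDegree ≤ 1 ∧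
      ∀ x ∈ E, MvPolynomial.eval x q = b x i)
    (ha : ∀ i j, ∃ q : MvPolynomial (Fin d) ℝ, q.totalDegree ≤ 2 ∧
      ∀ x ∈ E, MvPolynomial.eval x q = a x i j + ∫ ξ, ξ i * ξ j ∂(ν x))
    (hnu : ∀ α : Fin d → ℕ, 3 ≤ ∑ i, α i →
      ∃ q : MvPolynomial (Fin d) ℝ, q.totalDegree ≤ ∑ i, α i ∧
        ∀ x ∈ E, MvPolynomial.eval x q = ∫ ξ, ∏ i, ξ i ^ α i ∂(ν x)) :
    ∀ n : ℕ, ∀ p : MvPolynomial (Fin d) ℝ, p.totalDegree ≤ n →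
      ∃ r : MvPolynomial (Fin d) ℝ, r.totalDegree ≤ n ∧
        ∀ x ∈ E, MvPolynomial.eval x r =
          jdOp a b ν (fun y => MvPolynomial.eval y p) x :=
  stmt0_general E a b ν hmom hb ha hnu

end
end

section
/- Let 𝒢 be a jump-diffusion operator that is polynomial on E (maps Pol_n(E) to itself for each n). Then for every multi-index α with |α| ≥ 2, the function x ↦ ∫ ξ^α ν(x,dξ) is locally bounded on E, and x ↦ a(x) and x ↦ b(x) are locally bounded on E. -/
open MeasureTheory MvPolynomial Filter Set

noncomputable section

/-! Applying `jdOp` to the coordinate powers `y ↦ y i ^ n` produces, on `E`, polynomials in `y`: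
`b y i` for `n = 1`, `a y i i + 2 * b y i * y i + ∫ ξ i ^ 2` for `n = 2`, and for `n ≥ 3` the moment
`∫ ξ i ^ n` plus `a y i i`, `b y i` and the lower moments `∫ ξ i ^ m`, `2 ≤ m < n`, with polynomial
coefficients. Polynomials are locally bounded; `a y i i` and `∫ ξ i ^ 2` are nonnegative, so each
is bounded by their sum, and induction on `n` bounds every coordinate moment. Positive
semidefiniteness gives `2 |a y i j| ≤ a y i i + a y j j`, and a mixed moment `∫ ξ ^ α` is dominated
by `∑ i, (∫ ξ i ^ 2 + ∫ ξ i ^ (2 |α|))`. -/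

open Asymptotics Topology

theorem add_pow_sub_sub_eq_sum_Ico {R : Type*} [CommRing R] (t s : R) (n : ℕ) :
    (t + s) ^ n - t ^ n - s * (n * t ^ (n - 1))
      = ∑ m ∈ Finset.Ico 2 (n + 1), s ^ m * t ^ (n - m) * n.choose m := by
  cases n with
  | zero => simp
  | succ k =>
    rw [Finset.sum_Ico_eq_sub _ (by omega), add_comm t s, add_pow]
    simp only [Nat.cast_add, Nat.cast_one, add_tsub_cancel_right, Finset.sum_range_succ' _ 1,
      Finset.range_one, Nat.reduceSubDiff, Finset.sum_singleton, zero_add, pow_one, tsub_zero,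
      Nat.choose_one_right, pow_zero, one_mul, Nat.choose_zero_right, mul_one]
    ring

theorem abs_pow_le_sq_add_pow_two_mul (t : ℝ) {n : ℕ} (hn : 2 ≤ n) :
    |t| ^ n ≤ t ^ 2 + t ^ (2 * n) := by
  rcases le_total |t| 1 with h | h
  · calc |t| ^ n ≤ |t| ^ 2 := pow_le_pow_of_le_one (abs_nonneg t) h hn
      _ = t ^ 2 := sq_abs t
      _ ≤ t ^ 2 + t ^ (2 * n) := le_add_of_nonneg_right ((even_two_mul n).pow_nonneg t)
  · calc |t| ^ n ≤ |t| ^ (2 * n) := pow_le_pow_right₀ h (by omega)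
      _ = t ^ (2 * n) := (even_two_mul n).pow_abs t
      _ ≤ t ^ 2 + t ^ (2 * n) := le_add_of_nonneg_left (sq_nonneg t)

theorem abs_prod_pow_le_sum_abs_pow {ι : Type*} [Fintype ι] [Nonempty ι] (ξ : ι → ℝ)
    (α : ι → ℕ) : |∏ i, ξ i ^ α i| ≤ ∑ i, |ξ i| ^ ∑ j, α j := by
  obtain ⟨k, -, hk⟩ := Finset.exists_max_image Finset.univ (fun i => |ξ i|) Finset.univ_nonempty
  calc |∏ i, ξ i ^ α i| = ∏ i, |ξ i| ^ α i := by simp [Finset.abs_prod]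
    _ ≤ ∏ i, |ξ k| ^ α i := Finset.prod_le_prod (fun i _ => by positivity)
        fun i _ => pow_le_pow_left₀ (abs_nonneg _) (hk i (Finset.mem_univ i)) _
    _ = |ξ k| ^ ∑ j, α j := Finset.prod_pow_eq_pow_sum _ _ _
    _ ≤ ∑ i, |ξ i| ^ ∑ j, α j :=
        Finset.single_le_sum (f := fun i => |ξ i| ^ ∑ j, α j) (fun i _ => by positivity)
          (Finset.mem_univ k)

theorem Matrix.PosSemidef.two_mul_abs_apply_le {n : Type*} [Fintype n] [DecidableEq n]
    {M : Matrix n n ℝ} (hM : M.PosSemidef) (i j : n) : 2 * |M i j| ≤ M i i + M j j := by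
  have hsymm : M j i = M i j := by simpa using hM.isHermitian.apply i j
  have hquad (s : ℝ) : 0 ≤ M i i + s * (M i j + M j i) + s ^ 2 * M j j := by
    have h := hM.dotProduct_mulVec_nonneg (Pi.single i 1 + Pi.single j s)
    simp only [star_trivial, mulVec_add, mulVec_single, MulOpposite.op_one, one_smul,
      op_smul_eq_smul, dotProduct_add, add_dotProduct, single_dotProduct, col_apply, one_mul,
      dotProduct_smul, smul_eq_mul] at h
    linarith
  rcases abs_cases (M i j) with ⟨h, -⟩ | ⟨h, -⟩ <;> rw [h]
  · nlinarith [hquad (-1)]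
  · nlinarith [hquad 1]

theorem integrable_apply_pow {ι : Type*} [Fintype ι] {μ : Measure (ι → ℝ)} {m : ℕ}
    (h : Integrable (fun ξ => ‖ξ‖ ^ m) μ) (i : ι) : Integrable (fun ξ => ξ i ^ m) μ := by
  refine h.mono' ((continuous_apply i).pow m).aestronglyMeasurable (.of_forall fun ξ => ?_)
  simpa only [norm_pow] using pow_le_pow_left₀ (norm_nonneg _) (norm_le_pi_norm ξ i) m

theorem abs_integral_prod_pow_le {ι : Type*} [Fintype ι] {μ : Measure (ι → ℝ)}
    (hμ : ∀ m, 2 ≤ m → Integrable (fun ξ => ‖ξ‖ ^ m) μ) {α : ι → ℕ} (hα : 2 ≤ ∑ i, α i) :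
    |∫ ξ, ∏ i, ξ i ^ α i ∂μ|
      ≤ ∑ i, ((∫ ξ, ξ i ^ 2 ∂μ) + ∫ ξ, ξ i ^ (2 * ∑ j, α j) ∂μ) := by
  have : Nonempty ι :=
    Finset.univ_nonempty_iff.1 (Finset.nonempty_of_sum_ne_zero (f := α) (by omega))
  have hint (i : ι) : Integrable (fun ξ => ξ i ^ 2 + ξ i ^ (2 * ∑ j, α j)) μ :=
    (integrable_apply_pow (hμ 2 le_rfl) i).add (integrable_apply_pow (hμ _ (by omega)) i)
  calc |∫ ξ, ∏ i, ξ i ^ α i ∂μ| ≤ ∫ ξ, |∏ i, ξ i ^ α i| ∂μ := abs_integral_le_integral_abs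
    _ ≤ ∫ ξ, ∑ i, (ξ i ^ 2 + ξ i ^ (2 * ∑ j, α j)) ∂μ :=
        integral_mono_of_nonneg (.of_forall fun ξ => abs_nonneg _)
          (integrable_finsetSum _ fun i _ => hint i) (.of_forall fun ξ =>
            (abs_prod_pow_le_sum_abs_pow ξ α).trans
              (Finset.sum_le_sum fun i _ => abs_pow_le_sq_add_pow_two_mul (ξ i) hα))
    _ = ∑ i, ((∫ ξ, ξ i ^ 2 ∂μ) + ∫ ξ, ξ i ^ (2 * ∑ j, α j) ∂μ) := by
        rw [integral_finsetSum _ fun i _ => hint i]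
        exact Finset.sum_congr rfl fun i _ => integral_add
          (integrable_apply_pow (hμ 2 le_rfl) i) (integrable_apply_pow (hμ _ (by omega)) i)

theorem ContinuousWithinAt.boundedAtFilter {X F : Type*} [TopologicalSpace X]
    [NormedAddCommGroup F] {f : X → F} {s : Set X} {x : X} (hf : ContinuousWithinAt f s x) :
    BoundedAtFilter (𝓝[s] x) f :=
  hf.tendsto.isBigO_one ℝ

namespace Filter.BoundedAtFilter

theorem congr' {α F : Type*} [Norm F] {l : Filter α} {f g : α → F} (hf : BoundedAtFilter l f)
    (hfg : f =ᶠ[l] g) : BoundedAtFilter l g :=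
  IsBigO.congr' hf hfg .rfl

theorem of_add_of_nonneg {α : Type*} {l : Filter α} {f g : α → ℝ} (hf : ∀ y, 0 ≤ f y)
    (hg : ∀ y, 0 ≤ g y) (hfg : BoundedAtFilter l (f + g)) :
    BoundedAtFilter l f ∧ BoundedAtFilter l g := by
  have hle (y : α) : ‖f y‖ ≤ ‖(f + g) y‖ ∧ ‖g y‖ ≤ ‖(f + g) y‖ := by
    simp only [Pi.add_apply, Real.norm_of_nonneg, hf y, hg y, add_nonneg]
    exact ⟨le_add_of_nonneg_right (hg y), le_add_of_nonneg_left (hf y)⟩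
  exact ⟨(isBigO_of_le l fun y => (hle y).1).trans hfg,
    (isBigO_of_le l fun y => (hle y).2).trans hfg⟩

theorem exists_forall_mem_inter_norm_le {X F : Type*} [TopologicalSpace X] [Norm F]
    {f : X → F} {s : Set X} {x : X} (hf : BoundedAtFilter (𝓝[s] x) f) :
    ∃ U ∈ 𝓝 x, ∃ C : ℝ, ∀ y ∈ U ∩ s, ‖f y‖ ≤ C := by
  obtain ⟨C, hC⟩ := (isBigO_one_iff ℝ).1 hf
  obtain ⟨U, hU, hUs⟩ := mem_nhdsWithin_iff_exists_mem_nhds_inter.1 hC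
  exact ⟨U, hU, C, hUs⟩

end Filter.BoundedAtFilter

section Generator

variable {d : ℕ}

theorem fderiv_comp_coord {g g' : ℝ → ℝ} (hg : ∀ t, HasDerivAt g (g' t) t) (i : Fin d)
    (y v : Fin d → ℝ) : fderiv ℝ (fun z => g (z i)) y v = g' (y i) * v i := by
  have h : HasFDerivAt (fun z : Fin d → ℝ => g (z i))
      (g' (y i) • ContinuousLinearMap.proj (R := ℝ) (φ := fun _ : Fin d => ℝ) i) y :=
    (hg (y i)).comp_hasFDerivAt y (hasFDerivAt_apply i y)
  simp [h.fderiv]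

theorem fderiv_fderiv_comp_coord {g g' g'' : ℝ → ℝ} (hg : ∀ t, HasDerivAt g (g' t) t)
    (hg' : ∀ t, HasDerivAt g' (g'' t) t) (i : Fin d) (x v w : Fin d → ℝ) :
    fderiv ℝ (fun y => fderiv ℝ (fun z => g (z i)) y v) x w = g'' (x i) * v i * w i := by
  simp only [fderiv_comp_coord hg]
  exact fderiv_comp_coord (fun t => (hg' t).mul_const (v i)) i x w

variable (a : (Fin d → ℝ) → Matrix (Fin d) (Fin d) ℝ) (b : (Fin d → ℝ) → Fin d → ℝ)
  (ν : (Fin d → ℝ) → Measure (Fin d → ℝ))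

theorem jdOp_comp_coord {g g' g'' : ℝ → ℝ} (hg : ∀ t, HasDerivAt g (g' t) t)
    (hg' : ∀ t, HasDerivAt g' (g'' t) t) (i : Fin d) (x : Fin d → ℝ) :
    jdOp a b ν (fun y => g (y i)) x = 1 / 2 * a x i i * g'' (x i) + b x i * g' (x i)
      + ∫ ξ, (g (x i + ξ i) - g (x i) - ξ i * g' (x i)) ∂(ν x) := by
  simp only [jdOp, fderiv_fderiv_comp_coord hg hg']
  simp [fderiv_comp_coord hg, Pi.single_apply, mul_assoc]

theorem jdOp_coord_pow {x : Fin d → ℝ} (i : Fin d) (n : ℕ)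
    (hν : ∀ m ∈ Finset.Ico 2 (n + 1), Integrable (fun ξ => ξ i ^ m) (ν x)) :
    jdOp a b ν (fun y => y i ^ n) x
      = 1 / 2 * a x i i * (n * ((n - 1 : ℕ) * x i ^ (n - 1 - 1))) + b x i * (n * x i ^ (n - 1))
        + ∑ m ∈ Finset.Ico 2 (n + 1), (∫ ξ, ξ i ^ m ∂(ν x)) * x i ^ (n - m) * n.choose m := by
  rw [jdOp_comp_coord a b ν (fun t => hasDerivAt_pow n t)
    (fun t => (hasDerivAt_pow (n - 1) t).const_mul (n : ℝ))]
  simp only [add_pow_sub_sub_eq_sum_Ico]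
  rw [integral_finsetSum _ fun m hm => ((hν m hm).mul_const _).mul_const _]
  simp only [integral_mul_const]

end Generator

section LocalBounds

variable {d : ℕ} {E : Set (Fin d → ℝ)} {a : (Fin d → ℝ) → Matrix (Fin d) (Fin d) ℝ}
  {b : (Fin d → ℝ) → Fin d → ℝ} {ν : (Fin d → ℝ) → Measure (Fin d → ℝ)} {x : Fin d → ℝ}

theorem boundedAtFilter_drift
    (hgen : ∀ i n, BoundedAtFilter (𝓝[E] x) fun y => jdOp a b ν (fun z => z i ^ n) y)
    (i : Fin d) : BoundedAtFilter (𝓝[E] x) fun y => b y i :=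
  (hgen i 1).congr' (.of_forall fun y => by simpa using jdOp_coord_pow a b ν i 1 (by simp))

theorem boundedAtFilter_diffusion_diag_and_second_moment (hpsd : ∀ y, (a y).PosSemidef)
    (hmom : ∀ y ∈ E, ∀ n : ℕ, 2 ≤ n → Integrable (fun ξ => ‖ξ‖ ^ n) (ν y))
    (hgen : ∀ i n, BoundedAtFilter (𝓝[E] x) fun y => jdOp a b ν (fun z => z i ^ n) y)
    (i : Fin d) :
    BoundedAtFilter (𝓝[E] x) (fun y => a y i i)
      ∧ BoundedAtFilter (𝓝[E] x) fun y => ∫ ξ, ξ i ^ 2 ∂(ν y) := by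
  refine BoundedAtFilter.of_add_of_nonneg (fun y => (hpsd y).diag_nonneg)
    (fun y => integral_nonneg fun ξ => sq_nonneg _) ?_
  have hdrift : BoundedAtFilter (𝓝[E] x) fun y => b y i * (2 * y i) :=
    (boundedAtFilter_drift hgen i).mul
      (continuous_const.mul (continuous_apply i)).continuousWithinAt.boundedAtFilter
  refine BoundedAtFilter.congr' (IsBigO.sub (hgen i 2) hdrift)
    (eventually_nhdsWithin_of_forall fun y hy => ?_)
  simp only [Pi.add_apply, jdOp_coord_pow a b ν i 2
    fun m hm => integrable_apply_pow (hmom y hy m (Finset.mem_Ico.1 hm).1) i]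
  simp only [one_div, Nat.cast_ofNat, Nat.add_one_sub_one, Nat.cast_one, tsub_self, pow_zero,
    mul_one, pow_one, Nat.reduceAdd, Nat.Ico_succ_singleton, Finset.sum_singleton, Nat.choose_self]
  ring

theorem boundedAtFilter_moment_coord_pow (hpsd : ∀ y, (a y).PosSemidef)
    (hmom : ∀ y ∈ E, ∀ n : ℕ, 2 ≤ n → Integrable (fun ξ => ‖ξ‖ ^ n) (ν y))
    (hgen : ∀ i n, BoundedAtFilter (𝓝[E] x) fun y => jdOp a b ν (fun z => z i ^ n) y)
    (i : Fin d) (n : ℕ) (hn : 2 ≤ n) :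
    BoundedAtFilter (𝓝[E] x) fun y => ∫ ξ, ξ i ^ n ∂(ν y) := by
  induction n using Nat.strong_induction_on with
  | _ n ih =>
  rcases hn.eq_or_lt with rfl | hn
  · exact (boundedAtFilter_diffusion_diag_and_second_moment hpsd hmom hgen i).2
  have hcont (f : (Fin d → ℝ) → ℝ) (hf : Continuous f) : BoundedAtFilter (𝓝[E] x) f :=
    hf.continuousWithinAt.boundedAtFilter
  have hdiffusion : BoundedAtFilter (𝓝[E] x)
      fun y => 1 / 2 * a y i i * (n * ((n - 1 : ℕ) * y i ^ (n - 1 - 1))) :=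
    ((const_boundedAtFilter _ (1 / 2 : ℝ)).mul
      (boundedAtFilter_diffusion_diag_and_second_moment hpsd hmom hgen i).1).mul
      (hcont (fun y => n * ((n - 1 : ℕ) * y i ^ (n - 1 - 1))) (by fun_prop))
  have hdrift : BoundedAtFilter (𝓝[E] x) fun y => b y i * (n * y i ^ (n - 1)) :=
    (boundedAtFilter_drift hgen i).mul (hcont (fun y => n * y i ^ (n - 1)) (by fun_prop))
  have hlower : BoundedAtFilter (𝓝[E] x)
      fun y => ∑ m ∈ Finset.Ico 2 n, (∫ ξ, ξ i ^ m ∂(ν y)) * y i ^ (n - m) * n.choose m :=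
    IsBigO.fun_sum fun m hm => ((ih m (Finset.mem_Ico.1 hm).2 (Finset.mem_Ico.1 hm).1).mul
      (hcont (fun y => y i ^ (n - m)) (by fun_prop))).mul (const_boundedAtFilter _ _)
  refine BoundedAtFilter.congr' (IsBigO.sub (hgen i n) ((hdiffusion.add hdrift).add hlower))
    (eventually_nhdsWithin_of_forall fun y hy => ?_)
  simp only [Pi.add_apply, jdOp_coord_pow a b ν i n
    fun m hm => integrable_apply_pow (hmom y hy m (Finset.mem_Ico.1 hm).1) i,
    Finset.sum_Ico_succ_top (by omega : 2 ≤ n)]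
  simp

theorem boundedAtFilter_diffusion (hpsd : ∀ y, (a y).PosSemidef)
    (hmom : ∀ y ∈ E, ∀ n : ℕ, 2 ≤ n → Integrable (fun ξ => ‖ξ‖ ^ n) (ν y))
    (hgen : ∀ i n, BoundedAtFilter (𝓝[E] x) fun y => jdOp a b ν (fun z => z i ^ n) y)
    (i j : Fin d) : BoundedAtFilter (𝓝[E] x) fun y => a y i j := by
  have hdiag (k : Fin d) := (boundedAtFilter_diffusion_diag_and_second_moment hpsd hmom hgen k).1
  refine (isBigO_of_le' (c := 1 / 2) _ fun y => ?_).trans ((hdiag i).add (hdiag j))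
  rw [Real.norm_eq_abs, Pi.add_apply,
    Real.norm_of_nonneg (add_nonneg (hpsd y).diag_nonneg (hpsd y).diag_nonneg)]
  linarith [(hpsd y).two_mul_abs_apply_le i j]

theorem boundedAtFilter_moment (hpsd : ∀ y, (a y).PosSemidef)
    (hmom : ∀ y ∈ E, ∀ n : ℕ, 2 ≤ n → Integrable (fun ξ => ‖ξ‖ ^ n) (ν y))
    (hgen : ∀ i n, BoundedAtFilter (𝓝[E] x) fun y => jdOp a b ν (fun z => z i ^ n) y)
    (α : Fin d → ℕ) (hα : 2 ≤ ∑ i, α i) :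
    BoundedAtFilter (𝓝[E] x) fun y => ∫ ξ, ∏ i, ξ i ^ α i ∂(ν y) := by
  have hmoment := boundedAtFilter_moment_coord_pow hpsd hmom hgen
  have hbound : BoundedAtFilter (𝓝[E] x) fun y =>
      ∑ i, ((∫ ξ, ξ i ^ 2 ∂(ν y)) + ∫ ξ, ξ i ^ (2 * ∑ j, α j) ∂(ν y)) :=
    IsBigO.fun_sum fun i _ => (hmoment i 2 le_rfl).add (hmoment i _ (by omega))
  refine (IsBigO.of_bound' (eventually_nhdsWithin_of_forall fun y hy => ?_)).trans hbound
  exact (abs_integral_prod_pow_le (hmom y hy) hα).trans (le_abs_self _)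

end LocalBounds

theorem stmt1_general {d : ℕ} (E : Set (Fin d → ℝ))
    (a : (Fin d → ℝ) → Matrix (Fin d) (Fin d) ℝ)
    (b : (Fin d → ℝ) → Fin d → ℝ)
    (ν : (Fin d → ℝ) → Measure (Fin d → ℝ))
    (hpsd : ∀ x, (a x).PosSemidef)
    (hmom : ∀ x ∈ E, ∀ n : ℕ, 2 ≤ n → Integrable (fun ξ => ‖ξ‖ ^ n) (ν x))
    (hmap : ∀ n : ℕ, ∀ p : MvPolynomial (Fin d) ℝ, p.totalDegree ≤ n →
      ∃ r : MvPolynomial (Fin d) ℝ, r.totalDegree ≤ n ∧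
        ∀ x ∈ E, MvPolynomial.eval x r =
          jdOp a b ν (fun y => MvPolynomial.eval y p) x) :
    (∀ x ∈ E, ∃ U ∈ nhds x, ∃ C : ℝ, ∀ y ∈ U ∩ E,
        (∀ i j, |a y i j| ≤ C) ∧ (∀ i, |b y i| ≤ C)) ∧
    (∀ α : Fin d → ℕ, 2 ≤ ∑ i, α i → ∀ x ∈ E, ∃ U ∈ nhds x, ∃ C : ℝ,
        ∀ y ∈ U ∩ E, |∫ ξ, ∏ i, ξ i ^ α i ∂(ν y)| ≤ C) := by
  have hgen (x : Fin d → ℝ) (i : Fin d) (n : ℕ) :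
      BoundedAtFilter (𝓝[E] x) fun y => jdOp a b ν (fun z => z i ^ n) y := by
    obtain ⟨r, -, hr⟩ := hmap n (X i ^ n) (totalDegree_X_pow i n).le
    exact (continuous_eval r).continuousWithinAt.boundedAtFilter.congr'
      (eventually_nhdsWithin_of_forall fun y hy => by simpa using hr y hy)
  refine ⟨fun x _ => ?_, fun α hα x _ => ?_⟩
  · have hcoeff : BoundedAtFilter (𝓝[E] x)
        fun y => ((fun i j => a y i j : Fin d → Fin d → ℝ), b y) :=
      IsBigO.prod_left
        (isBigO_pi.2 fun i => isBigO_pi.2 (boundedAtFilter_diffusion hpsd hmom (hgen x) i))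
        (isBigO_pi.2 (boundedAtFilter_drift (hgen x)))
    obtain ⟨U, hU, C, hC⟩ := hcoeff.exists_forall_mem_inter_norm_le
    refine ⟨U, hU, C, fun y hy => ⟨fun i j => ?_, fun i => ?_⟩⟩
    · exact (norm_le_pi_norm _ j).trans <| (norm_le_pi_norm _ i).trans <|
        (norm_fst_le _).trans (hC y hy)
    · exact (norm_le_pi_norm _ i).trans <| (norm_snd_le _).trans (hC y hy)
  · exact (boundedAtFilter_moment hpsd hmom (hgen x) α hα).exists_forall_mem_inter_norm_le

/-- if the jump-diffusion operator `𝒢` is polynomial on `E`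
(well-defined on `Pol(E)` and maps `Pol_n(E)` to itself), then `a`, `b`, and all
jump moments `x ↦ ∫ ξ^α ν(x,dξ)` with `|α| ≥ 2` are locally bounded on `E`. -/
theorem stmt1 {d : ℕ} (E : Set (Fin d → ℝ))
    (a : (Fin d → ℝ) → Matrix (Fin d) (Fin d) ℝ)
    (b : (Fin d → ℝ) → Fin d → ℝ)
    (ν : (Fin d → ℝ) → Measure (Fin d → ℝ))
    (hpsd : ∀ x, (a x).PosSemidef)
    (hν0 : ∀ x, ν x ({0} : Set (Fin d → ℝ)) = 0)
    (hmom : ∀ x ∈ E, ∀ n : ℕ, 2 ≤ n → Integrable (fun ξ => ‖ξ‖ ^ n) (ν x))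
    (hvanish : ∀ p : MvPolynomial (Fin d) ℝ, (∀ x ∈ E, MvPolynomial.eval x p = 0) →
      ∀ x ∈ E, jdOp a b ν (fun y => MvPolynomial.eval y p) x = 0)
    (hmap : ∀ n : ℕ, ∀ p : MvPolynomial (Fin d) ℝ, p.totalDegree ≤ n →
      ∃ r : MvPolynomial (Fin d) ℝ, r.totalDegree ≤ n ∧
        ∀ x ∈ E, MvPolynomial.eval x r =
          jdOp a b ν (fun y => MvPolynomial.eval y p) x) :
    (∀ x ∈ E, ∃ U ∈ nhds x, ∃ C : ℝ, ∀ y ∈ U ∩ E,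
        (∀ i j, |a y i j| ≤ C) ∧ (∀ i, |b y i| ≤ C)) ∧
    (∀ α : Fin d → ℕ, 2 ≤ ∑ i, α i → ∀ x ∈ E, ∃ U ∈ nhds x, ∃ C : ℝ,
        ∀ y ∈ U ∩ E, |∫ ξ, ∏ i, ξ i ^ α i ∂(ν y)| ≤ C) :=
  stmt1_general E a b ν hpsd hmom hmap
end
end

section
/- Consider the ODE system φ′(τ) = 0, ψ′(τ) = λ(e^{−ψ(τ)} − 1) with λ > 0 and complex initial condition ψ(0) = iπ. This system admits no global (complex-valued, continuously differentiable) solution on [0,∞). More precisely, if ψ solves the ODE on [0,T*] then Ψ(τ) = e^{ψ(τ)} solves Ψ′ = −λΨ + λ with Ψ(0) = −1, so Ψ(τ) = 1 − 2e^{−λτ}, which vanishes at τ = λ⁻¹ log 2; hence no solution ψ can exist past (or at) time λ⁻¹ log 2. -/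
/-!
Along a solution `ψ`, the function `Ψ = exp ∘ ψ` solves the linear equation `Ψ' = λ(1 - Ψ)`, so
`(Ψ - 1) e^{λτ}` is constant, equal to `Ψ(0) - 1 = e^{iπ} - 1 = -2`. At `τ = λ⁻¹ log 2` this
forces `Ψ = 0`, which is impossible for an exponential.
-/

open Set

noncomputable section

theorem HasDerivAt.cexp_of_riccati {ψ : ℝ → ℂ} {lam : ℂ} {τ : ℝ}
    (h : HasDerivAt ψ (lam * (Complex.exp (-ψ τ) - 1)) τ) :
    HasDerivAt (fun t => Complex.exp (ψ t)) (lam * (1 - Complex.exp (ψ τ))) τ := by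
  have hinv : Complex.exp (ψ τ) * Complex.exp (-ψ τ) = 1 := by
    rw [← Complex.exp_add, add_neg_cancel, Complex.exp_zero]
  convert h.cexp using 1
  linear_combination -lam * hinv

theorem hasDerivAt_cexp_ofReal_mul (lam t : ℝ) :
    HasDerivAt (fun t : ℝ => Complex.exp (lam * t)) (lam * Complex.exp (lam * t)) t := by
  simpa [mul_comm] using (((hasDerivAt_id t).const_mul lam).ofReal_comp).cexp

theorem HasDerivAt.sub_one_mul_cexp_of_relaxation {Ψ : ℝ → ℂ} {lam τ : ℝ}
    (h : HasDerivAt Ψ (lam * (1 - Ψ τ)) τ) :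
    HasDerivAt (fun t => (Ψ t - 1) * Complex.exp (lam * t)) 0 τ := by
  refine ((h.sub_const 1).mul (hasDerivAt_cexp_ofReal_mul lam τ)).congr_deriv ?_
  ring

theorem sub_one_mul_cexp_eq_of_relaxation {Ψ : ℝ → ℂ} {lam a b : ℝ}
    (h : ∀ t ∈ Icc a b, HasDerivAt Ψ (lam * (1 - Ψ t)) t) :
    ∀ t ∈ Icc a b, (Ψ t - 1) * Complex.exp (lam * t) = (Ψ a - 1) * Complex.exp (lam * a) := by
  have hconst := fun t ht => (h t ht).sub_one_mul_cexp_of_relaxation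
  exact constant_of_has_deriv_right_zero
    (fun t ht => (hconst t ht).continuousAt.continuousWithinAt)
    (fun t ht => (hconst t (Ico_subset_Icc_self ht)).hasDerivWithinAt)

/-- the generalized Riccati equation `ψ′ = λ(e^{−ψ} − 1)` with complex
initial condition `ψ(0) = iπ` admits no solution existing up to (and including) the
time `λ⁻¹ log 2`; in particular no global solution on `[0,∞)` exists. -/
theorem stmt5 (lam : ℝ) (hlam : 0 < lam) :
    ¬ ∃ ψ : ℝ → ℂ, ψ 0 = Real.pi * Complex.I ∧
      ∀ τ ∈ Set.Icc (0 : ℝ) (lam⁻¹ * Real.log 2),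
        HasDerivAt ψ ((lam : ℂ) * (Complex.exp (-ψ τ) - 1)) τ := by
  rintro ⟨ψ, h0, hψ⟩
  set T := lam⁻¹ * Real.log 2
  have hT : T ∈ Icc 0 T := ⟨by positivity, le_rfl⟩
  have hexpT : Complex.exp (lam * T) = 2 := by
    rw [← Complex.ofReal_mul, mul_inv_cancel_left₀ hlam.ne', ← Complex.ofReal_exp,
      Real.exp_log two_pos, Complex.ofReal_ofNat]
  have hconst := sub_one_mul_cexp_eq_of_relaxation (fun t ht => (hψ t ht).cexp_of_riccati) T hT
  rw [hexpT, h0, Complex.exp_pi_mul_I, Complex.ofReal_zero, mul_zero, Complex.exp_zero] at hconst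
  exact Complex.exp_ne_zero (ψ T) (by linear_combination hconst / 2)

end
end

section
/- For the process X_t on E = {0,1} that jumps from 1 to 0 with intensity λ > 0 and is absorbed at 0, started at X₀ = 1, the characteristic function is E[e^{uX_T}] = 1 − e^{−λT} + e^{u−λT} for u ∈ iℝ. In particular, for u = iπ and T = λ⁻¹ log 2 this expectation equals 0, so it cannot be written in exponential-affine form e^{φ+ψX₀}. -/
open MeasureTheory Set

noncomputable section

theorem integral_comp_of_ae_eq_zero_or_one {Ω E : Type*} [MeasurableSpace Ω]
    [NormedAddCommGroup E] [NormedSpace ℝ E] [CompleteSpace E]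
    {μ : Measure Ω} [IsProbabilityMeasure μ]
    {X : Ω → ℝ} (hX : Measurable X) (h01 : ∀ᵐ ω ∂μ, X ω = 0 ∨ X ω = 1) (g : ℝ → E) :
    ∫ ω, g (X ω) ∂μ = g 0 + μ.real {ω | X ω = 1} • (g 1 - g 0) := by
  set A := {ω | X ω = 1}
  have hA : MeasurableSet A := hX (measurableSet_singleton 1)
  have hsplit : (fun ω => g (X ω)) =ᵐ[μ] fun ω => A.indicator (fun _ => g 1 - g 0) ω + g 0 := by
    filter_upwards [h01] with ω hω
    rcases hω with h | h <;> simp [A, h]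
  rw [integral_congr_ae hsplit, integral_add ((integrable_const _).indicator hA)
    (integrable_const _), integral_indicator_const _ hA, integral_const, probReal_univ,
    one_smul, add_comm]

theorem stmt6_general {Ω : Type*} [MeasurableSpace Ω] (μ : Measure Ω)
    [IsProbabilityMeasure μ] (lam T : ℝ) (hlam : 0 < lam)
    (XT : Ω → ℝ) (hmeas : Measurable XT)
    (hval : ∀ᵐ ω ∂μ, XT ω = 0 ∨ XT ω = 1)
    (h1 : μ {ω | XT ω = 1} = ENNReal.ofReal (Real.exp (-lam * T))) :
    (∀ u : ℂ, u.re = 0 →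
      (∫ ω, Complex.exp (u * (XT ω : ℂ)) ∂μ) =
        1 - Real.exp (-lam * T) + Complex.exp (u - lam * T)) ∧
    (T = lam⁻¹ * Real.log 2 →
      (∫ ω, Complex.exp ((Real.pi : ℂ) * Complex.I * (XT ω : ℂ)) ∂μ) = 0 ∧
      ∀ φ ψ : ℂ,
        (∫ ω, Complex.exp ((Real.pi : ℂ) * Complex.I * (XT ω : ℂ)) ∂μ) ≠
          Complex.exp (φ + ψ * 1)) := by
  have hp : μ.real {ω | XT ω = 1} = Real.exp (-lam * T) := by
    rw [measureReal_def, h1, ENNReal.toReal_ofReal (Real.exp_pos _).le]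
  have hchar (u : ℂ) :
      ∫ ω, Complex.exp (u * (XT ω : ℂ)) ∂μ = 1 + Real.exp (-lam * T) * (Complex.exp u - 1) := by
    simpa [hp, Complex.real_smul] using
      integral_comp_of_ae_eq_zero_or_one hmeas hval fun x : ℝ => Complex.exp (u * x)
  refine ⟨fun u _ => ?_, fun hT => ?_⟩
  · have hshift : Complex.exp (u - lam * T) = Complex.exp u * Real.exp (-lam * T) := by
      rw [sub_eq_add_neg, Complex.exp_add, Complex.ofReal_exp]
      push_cast
      ring_nf
    rw [hchar, hshift]
    ring
  · have hhalf : Real.exp (-lam * T) = 1 / 2 := by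
      rw [hT, neg_mul, ← mul_assoc, mul_inv_cancel₀ hlam.ne', one_mul, Real.exp_neg,
        Real.exp_log two_pos, one_div]
    have hzero : ∫ ω, Complex.exp ((Real.pi : ℂ) * Complex.I * (XT ω : ℂ)) ∂μ = 0 := by
      rw [hchar, Complex.exp_pi_mul_I, hhalf]
      norm_num
    exact ⟨hzero, fun φ ψ h => Complex.exp_ne_zero _ (hzero ▸ h).symm⟩

/-- for the process on `E = {0,1}` jumping from `1` to `0` with
intensity `λ`, started at `1`, the value at time `T` equals `1` with probability
`e^{−λT}` and `0` otherwise.  Then `E[e^{uX_T}] = 1 − e^{−λT} + e^{u−λT}` for all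
purely imaginary `u`; and for `u = iπ`, `T = λ⁻¹ log 2` this expectation is `0`, so
it cannot be written in exponential-affine form `e^{φ+ψ·X₀} = e^{φ+ψ}`. -/
theorem stmt6 {Ω : Type*} [MeasurableSpace Ω] (μ : Measure Ω)
    [IsProbabilityMeasure μ] (lam T : ℝ) (hlam : 0 < lam) (hT : 0 < T)
    (XT : Ω → ℝ) (hmeas : Measurable XT)
    (hval : ∀ᵐ ω ∂μ, XT ω = 0 ∨ XT ω = 1)
    (h1 : μ {ω | XT ω = 1} = ENNReal.ofReal (Real.exp (-lam * T))) :
    (∀ u : ℂ, u.re = 0 →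
      (∫ ω, Complex.exp (u * (XT ω : ℂ)) ∂μ) =
        1 - Real.exp (-lam * T) + Complex.exp (u - lam * T)) ∧
    (T = lam⁻¹ * Real.log 2 →
      (∫ ω, Complex.exp ((Real.pi : ℂ) * Complex.I * (XT ω : ℂ)) ∂μ) = 0 ∧
      ∀ φ ψ : ℂ,
        (∫ ω, Complex.exp ((Real.pi : ℂ) * Complex.I * (XT ω : ℂ)) ∂μ) ≠
          Complex.exp (φ + ψ * 1)) :=
  stmt6_general μ lam T hlam XT hmeas hval h1

end
end

section
/- With notation as above (H a polynomial map built from a basis {1,h₁,…,h_N} of Pol_n(E), and L : ℝ^N → ℝ^d with components the linear polynomials ℓ_i satisfying L∘H = id on E): any polynomial p of degree at most mn on E can be written p(x) = f(H(x)) on E for some polynomial f of degree at most m on H(E). -/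
/-!
Let `P k = pullbackOn E h k` be the space of polynomials that agree on `E` with `f ∘ H` for some
`f` of degree at most `k`. Multiplying representations gives `P a * P b ≤ P (a + b)`, and the
hypothesis says that `P 1` contains every polynomial of degree at most `n`. Since every exponent
of degree at most `m n` is a sum of `m` exponents of degree at most `n`, the polynomials of degree
at most `m n` lie in the `m`-th power of those of degree at most `n`, hence in `P 1 ^ m ≤ P m`.
-/

open MvPolynomial

open scoped Pointwise in
theorem Finsupp.setOf_degree_le_mul_subset_nsmul {σ : Type*} (m n : ℕ) :
    {α : σ →₀ ℕ | α.degree ≤ m * n} ⊆ m • {α | α.degree ≤ n} := by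
  induction m with
  | zero => simp [degree_eq_zero_iff]
  | succ m ih =>
    intro α hα
    obtain ⟨β, hβα, hβ⟩ := α.exists_le_degree_eq (min n α.degree) (min_le_right ..)
    obtain ⟨γ, rfl⟩ := le_iff_exists_add.mp hβα
    have hγ : γ.degree ≤ m * n := by
      have hα : (β + γ).degree ≤ (m + 1) * n := hα
      rw [map_add, add_one_mul] at hα
      rw [map_add] at hβ
      omega
    rw [succ_nsmul, add_comm β]
    exact Set.add_mem_add (ih hγ) (hβ.trans_le (min_le_left _ _))

namespace MvPolynomial

variable {σ ι R : Type*} [CommSemiring R]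

theorem restrictTotalDegree_mul_le_pow (m n : ℕ) :
    restrictTotalDegree σ R (m * n) ≤ restrictTotalDegree σ R n ^ m := by
  rw [restrictTotalDegree, restrictTotalDegree, ← restrictSupport_nsmul]
  exact restrictSupport_mono R (Finsupp.setOf_degree_le_mul_subset_nsmul m n)

theorem totalDegree_X_le_one (i : ι) : (X i : MvPolynomial ι R).totalDegree ≤ 1 :=
  (totalDegree_monomial_le (Finsupp.single i 1) (1 : R)).trans (by simp)

theorem totalDegree_C_add_sum_C_mul_X_le_one [Fintype ι] (c : R) (w : ι → R) :
    (C c + ∑ i, C (w i) * X i : MvPolynomial ι R).totalDegree ≤ 1 := by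
  refine (totalDegree_add _ _).trans (max_le (by simp) ((totalDegree_finsetSum _ _).trans ?_))
  refine Finset.sup_le fun i _ => (totalDegree_mul _ _).trans ?_
  simpa using totalDegree_X_le_one i

def pullbackOn (E : Set (σ → R)) (h : ι → MvPolynomial σ R) (k : ℕ) :
    Submodule R (MvPolynomial σ R) where
  carrier := {p | ∃ f : MvPolynomial ι R, f.totalDegree ≤ k ∧
    ∀ x ∈ E, eval (fun j => eval x (h j)) f = eval x p}
  add_mem' := by
    rintro p q ⟨f, hf, hfp⟩ ⟨g, hg, hgq⟩
    exact ⟨f + g, (totalDegree_add _ _).trans (max_le hf hg), fun x hx => by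
      simp [hfp x hx, hgq x hx]⟩
  zero_mem' := ⟨0, by simp, by simp⟩
  smul_mem' := by
    rintro c p ⟨f, hf, hfp⟩
    exact ⟨c • f, (totalDegree_smul_le _ _).trans hf, fun x hx => by simp [hfp x hx]⟩

variable {E : Set (σ → R)} {h : ι → MvPolynomial σ R}

theorem pullbackOn_mul_le (a b : ℕ) :
    pullbackOn E h a * pullbackOn E h b ≤ pullbackOn E h (a + b) := by
  refine Submodule.mul_le.2 fun p ⟨f, hf, hfp⟩ q ⟨g, hg, hgq⟩ => ?_
  exact ⟨f * g, (totalDegree_mul _ _).trans (add_le_add hf hg), fun x hx => by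
    simp [hfp x hx, hgq x hx]⟩

theorem pullbackOn_one_pow_le (m : ℕ) : pullbackOn E h 1 ^ m ≤ pullbackOn E h m := by
  induction m with
  | zero => exact Submodule.one_le.2 ⟨1, by simp, by simp⟩
  | succ m ih =>
    rw [pow_succ]
    exact (mul_le_mul' ih le_rfl).trans (pullbackOn_mul_le m 1)

theorem restrictTotalDegree_mul_le_pullbackOn {n : ℕ}
    (hn : restrictTotalDegree σ R n ≤ pullbackOn E h 1) (m : ℕ) :
    restrictTotalDegree σ R (m * n) ≤ pullbackOn E h m :=
  calc restrictTotalDegree σ R (m * n) ≤ restrictTotalDegree σ R n ^ m :=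
        restrictTotalDegree_mul_le_pow m n
    _ ≤ pullbackOn E h 1 ^ m := pow_le_pow_left' hn m
    _ ≤ pullbackOn E h m := pullbackOn_one_pow_le m

end MvPolynomial

theorem stmt10_general {d N n : ℕ} (E : Set (Fin d → ℝ))
    (h : Fin N → MvPolynomial (Fin d) ℝ)
    (hspan : ∀ q : MvPolynomial (Fin d) ℝ, q.totalDegree ≤ n →
      ∃ c : ℝ, ∃ w : Fin N → ℝ, ∀ x ∈ E,
        MvPolynomial.eval x q = c + ∑ i, w i * MvPolynomial.eval x (h i))
    (m : ℕ) (p : MvPolynomial (Fin d) ℝ) (hp : p.totalDegree ≤ m * n) :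
    ∃ f : MvPolynomial (Fin N) ℝ, f.totalDegree ≤ m ∧
      ∀ x ∈ E,
        MvPolynomial.eval (fun j : Fin N => MvPolynomial.eval x (h j)) f =
          MvPolynomial.eval x p := by
  have hlin : restrictTotalDegree (Fin d) ℝ n ≤ pullbackOn E h 1 := fun q hq => by
    obtain ⟨c, w, hcw⟩ := hspan q (by rwa [mem_restrictTotalDegree] at hq)
    exact ⟨C c + ∑ i, C (w i) * X i, totalDegree_C_add_sum_C_mul_X_le_one c w,
      fun x hx => by simp [hcw x hx]⟩
  exact restrictTotalDegree_mul_le_pullbackOn hlin m (by rwa [mem_restrictTotalDegree])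

/-- with `H` built from a basis `{1,h₁,…,h_N}` of `Pol_n(E)`, every
polynomial `p` of degree ≤ `m·n` on `E` can be written `p(x) = f(H(x))` on `E` for
some polynomial `f` of degree ≤ `m`. -/
theorem stmt10 {d N n : ℕ} (E : Set (Fin d → ℝ))
    (h : Fin N → MvPolynomial (Fin d) ℝ)
    (hdeg : ∀ i, (h i).totalDegree ≤ n)
    (hspan : ∀ q : MvPolynomial (Fin d) ℝ, q.totalDegree ≤ n →
      ∃ c : ℝ, ∃ w : Fin N → ℝ, ∀ x ∈ E,
        MvPolynomial.eval x q = c + ∑ i, w i * MvPolynomial.eval x (h i))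
    (m : ℕ) (p : MvPolynomial (Fin d) ℝ) (hp : p.totalDegree ≤ m * n) :
    ∃ f : MvPolynomial (Fin N) ℝ, f.totalDegree ≤ m ∧
      ∀ x ∈ E,
        MvPolynomial.eval (fun j : Fin N => MvPolynomial.eval x (h j)) f =
          MvPolynomial.eval x p :=
  stmt10_general E h hspan m p hp
end

section
/- The pullback map H* (defined by H*f(x) = f(H(x))) is a linear isomorphism from Pol_m(H(E)) onto Pol_{mn}(E), with inverse the pullback L* (L*p(x̄) = p(L(x̄))), for every m ∈ ℕ. -/
/-!
As submodules of polynomials, `Pol_{a+b} = Pol_a * Pol_b`: a monomial of degree `≤ a + b` is a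
product of monomials of degrees `≤ a` and `≤ b`. Hence `Pol_{kn} = Pol_n ^ k`, and the same holds
after any algebra map, in particular after restricting functions to `E`. The spanning hypothesis
says that, restricted to `E`, `Pol_n` is the `H*`-image of `Pol_1`; taking `m`-th powers,
`Pol_{mn}(E)` is the `H*`-image of `Pol_1 ^ m = Pol_m`. Everything else is substitution.
-/

open MvPolynomial Set

noncomputable section

namespace MvPolynomial

variable {σ τ R : Type*} [CommSemiring R]

theorem totalDegree_aeval_le (h : τ → MvPolynomial σ R) {n : ℕ}
    (hdeg : ∀ i, (h i).totalDegree ≤ n) (f : MvPolynomial τ R) :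
    (aeval h f).totalDegree ≤ f.totalDegree * n := by
  conv_lhs => rw [f.as_sum, map_sum]
  refine totalDegree_finsetSum_le fun α hα => ?_
  rw [aeval_monomial, algebraMap_eq]
  calc (C (f.coeff α) * α.prod fun i k => h i ^ k).totalDegree
      ≤ (α.prod fun i k => h i ^ k).totalDegree := by
        simpa using totalDegree_mul (C (f.coeff α)) _
    _ ≤ ∑ i ∈ α.support, α i * n :=
        (totalDegree_finsetProd _ _).trans <| Finset.sum_le_sum fun i _ =>
          (totalDegree_pow _ _).trans (Nat.mul_le_mul_left _ (hdeg i))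
    _ = α.degree * n := by rw [← Finset.sum_mul, Finsupp.degree_apply]
    _ ≤ f.totalDegree * n := Nat.mul_le_mul_right _ (le_totalDegree hα)

variable (σ R)

open scoped Pointwise in
theorem restrictTotalDegree_zero : restrictTotalDegree σ R 0 = 1 := by
  rw [restrictTotalDegree, ← restrictSupport_zero]
  congr 1
  ext α
  change α.degree ≤ 0 ↔ α ∈ (0 : Set (σ →₀ ℕ))
  simp [Finsupp.degree_eq_zero_iff]

theorem restrictTotalDegree_add (a b : ℕ) :
    restrictTotalDegree σ R (a + b) = restrictTotalDegree σ R a * restrictTotalDegree σ R b := by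
  refine le_antisymm ?_ (Submodule.mul_le.mpr fun p hp q hq => ?_)
  · rw [restrictTotalDegree, restrictSupport_eq_span, Submodule.span_le]
    rintro _ ⟨α, hα, rfl⟩
    change α.degree ≤ a + b at hα
    obtain ⟨γ, hγα, hγ⟩ := α.exists_le_degree_eq (min a α.degree) (min_le_right _ _)
    obtain ⟨β, rfl⟩ := le_iff_exists_add.mp hγα
    change monomial (γ + β) (1 : R) ∈ restrictTotalDegree σ R a * restrictTotalDegree σ R b
    rw [show monomial (γ + β) (1 : R) = monomial γ 1 * monomial β 1 by simp]
    refine Submodule.mul_mem_mul ?_ ?_ <;>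
      rw [mem_restrictTotalDegree] <;> refine (totalDegree_monomial_le _ _).trans ?_
    · exact hγ.le.trans (min_le_left _ _)
    · change β.degree ≤ b
      rw [map_add] at hα hγ
      omega
  · rw [mem_restrictTotalDegree] at hp hq ⊢
    exact (totalDegree_mul p q).trans (add_le_add hp hq)

theorem restrictTotalDegree_mul (k n : ℕ) :
    restrictTotalDegree σ R (k * n) = restrictTotalDegree σ R n ^ k := by
  induction k with
  | zero => rw [zero_mul, pow_zero, restrictTotalDegree_zero]
  | succ k ih => rw [add_mul, one_mul, restrictTotalDegree_add, ih, pow_succ]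

variable {σ R}

theorem map_restrictTotalDegree_mul_le {B : Type*} [Semiring B] [Algebra R B]
    {φ : MvPolynomial σ R →ₐ[R] B} {ψ : MvPolynomial τ R →ₐ[R] B} {a b : ℕ}
    (hle : (restrictTotalDegree σ R a).map φ.toLinearMap ≤
      (restrictTotalDegree τ R b).map ψ.toLinearMap) (k : ℕ) :
    (restrictTotalDegree σ R (k * a)).map φ.toLinearMap ≤
      (restrictTotalDegree τ R (k * b)).map ψ.toLinearMap := by
  rw [restrictTotalDegree_mul, restrictTotalDegree_mul, Submodule.map_pow, Submodule.map_pow]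
  exact pow_le_pow_left' hle k

/-- `Pol_m(S)` is the image of `restrictTotalDegree σ R m` under `evalOn S`. -/
def evalOn (S : Set (σ → R)) : MvPolynomial σ R →ₐ[R] (S → R) :=
  AlgHom.pi fun x => aeval x.1

theorem evalOn_apply (S : Set (σ → R)) (p : MvPolynomial σ R) (x : S) :
    evalOn S p x = eval x.1 p := rfl

theorem exists_totalDegree_le_eval_aeval [Fintype τ] (E : Set (σ → R))
    (h : τ → MvPolynomial σ R) {n : ℕ}
    (hspan : ∀ q : MvPolynomial σ R, q.totalDegree ≤ n →
      ∃ c : R, ∃ w : τ → R, ∀ x ∈ E, eval x q = c + ∑ i, w i * eval x (h i))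
    (k : ℕ) (p : MvPolynomial σ R) (hp : p.totalDegree ≤ k * n) :
    ∃ f : MvPolynomial τ R, f.totalDegree ≤ k ∧ ∀ x ∈ E, eval x (aeval h f) = eval x p := by
  have hbase : (restrictTotalDegree σ R n).map (evalOn E).toLinearMap ≤
      (restrictTotalDegree τ R 1).map ((evalOn E).comp (aeval h)).toLinearMap := by
    rintro _ ⟨q, hq, rfl⟩
    obtain ⟨c, w, hcw⟩ := hspan q ((mem_restrictTotalDegree _ _ _).mp hq)
    refine ⟨C c + ∑ i, C (w i) * X i, (mem_restrictTotalDegree _ _ _).mpr ?_, ?_⟩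
    · refine (totalDegree_add _ _).trans (max_le (by simp) (totalDegree_finsetSum_le fun i _ => ?_))
      rw [C_mul_X_eq_monomial]
      exact (totalDegree_monomial_le _ _).trans (by simp)
    · funext x
      simp [evalOn_apply, hcw x x.2]
  obtain ⟨f, hf, hfp⟩ := map_restrictTotalDegree_mul_le hbase k
    ⟨p, (mem_restrictTotalDegree _ _ _).mpr hp, rfl⟩
  exact ⟨f, by simpa using (mem_restrictTotalDegree _ _ _).mp hf, fun x hx => congrFun hfp ⟨x, hx⟩⟩

end MvPolynomial

theorem stmt11_general {d N n : ℕ} (E : Set (Fin d → ℝ))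
    (h : Fin N → MvPolynomial (Fin d) ℝ)
    (hdeg : ∀ i, (h i).totalDegree ≤ n)
    (hspan : ∀ q : MvPolynomial (Fin d) ℝ, q.totalDegree ≤ n →
      ∃ c : ℝ, ∃ w : Fin N → ℝ, ∀ x ∈ E,
        MvPolynomial.eval x q = c + ∑ i, w i * MvPolynomial.eval x (h i))
    -- `H : E → ℝ^N` and `L : ℝ^N → ℝ^d` with `L ∘ H = id` on `E`, `H ∘ L = id` on `H(E)`
    (H : (Fin d → ℝ) → (Fin N → ℝ))
    (hH : ∀ x, H x = fun j : Fin N => MvPolynomial.eval x (h j))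
    (L : (Fin N → ℝ) → (Fin d → ℝ))
    (hLH : ∀ x ∈ E, L (H x) = x)
    (hHL : ∀ y ∈ H '' E, H (L y) = y)
    (m : ℕ) :
    -- `H*` maps `Pol_m(H(E))` into `Pol_{mn}(E)`
    (∀ f : MvPolynomial (Fin N) ℝ, f.totalDegree ≤ m →
      ∃ p : MvPolynomial (Fin d) ℝ, p.totalDegree ≤ m * n ∧
        ∀ x ∈ E, MvPolynomial.eval x p = MvPolynomial.eval (H x) f) ∧
    -- `H*` is injective as a map on restrictions (polynomials agreeing on `E` after
    -- pullback agree on `H(E)`)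
    (∀ f₁ f₂ : MvPolynomial (Fin N) ℝ, f₁.totalDegree ≤ m → f₂.totalDegree ≤ m →
      (∀ x ∈ E, MvPolynomial.eval (H x) f₁ = MvPolynomial.eval (H x) f₂) →
      ∀ y ∈ H '' E, MvPolynomial.eval y f₁ = MvPolynomial.eval y f₂) ∧
    -- `H*` is surjective onto `Pol_{mn}(E)`
    (∀ p : MvPolynomial (Fin d) ℝ, p.totalDegree ≤ m * n →
      ∃ f : MvPolynomial (Fin N) ℝ, f.totalDegree ≤ m ∧
        ∀ x ∈ E, MvPolynomial.eval (H x) f = MvPolynomial.eval x p) ∧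
    -- `L*` is a two-sided inverse: `L*H* = id` on `Pol_m(H(E))`, `H*L* = id` on `Pol_{mn}(E)`
    (∀ f : MvPolynomial (Fin N) ℝ, f.totalDegree ≤ m →
      ∀ y ∈ H '' E, MvPolynomial.eval (H (L y)) f = MvPolynomial.eval y f) ∧
    (∀ p : MvPolynomial (Fin d) ℝ, p.totalDegree ≤ m * n →
      ∀ x ∈ E, MvPolynomial.eval (L (H x)) p = MvPolynomial.eval x p) := by
  have hpull : ∀ f x, MvPolynomial.eval (H x) f = MvPolynomial.eval x (aeval h f) := by
    intro f x
    rw [hH, aeval_def, algebraMap_eq, ← eval_assoc]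
    rfl
  refine ⟨fun f hf => ?_, ?_, fun p hp => ?_, ?_, ?_⟩
  · exact ⟨aeval h f, (totalDegree_aeval_le h hdeg f).trans (Nat.mul_le_mul_right n hf),
      fun x _ => (hpull f x).symm⟩
  · rintro f₁ f₂ - - hagree y ⟨x, hx, rfl⟩
    exact hagree x hx
  · obtain ⟨f, hf, hfp⟩ := exists_totalDegree_le_eval_aeval E h hspan m p hp
    exact ⟨f, hf, fun x hx => (hpull f x).trans (hfp x hx)⟩
  · intro f _ y hy
    rw [hHL y hy]
  · intro p _ x hx
    rw [hLH x hx]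

/-- the pullback `H*` (`H*f = f ∘ H`) is a linear isomorphism from
`Pol_m(H(E))` onto `Pol_{mn}(E)` with inverse the pullback `L*` (`L*p = p ∘ L`):
it is well-defined, injective (on restrictions to `H(E)`), surjective, and `L*` is a
two-sided inverse. -/
theorem stmt11 {d N n : ℕ} (E : Set (Fin d → ℝ))
    (h : Fin N → MvPolynomial (Fin d) ℝ)
    (hdeg : ∀ i, (h i).totalDegree ≤ n)
    (hspan : ∀ q : MvPolynomial (Fin d) ℝ, q.totalDegree ≤ n →
      ∃ c : ℝ, ∃ w : Fin N → ℝ, ∀ x ∈ E,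
        MvPolynomial.eval x q = c + ∑ i, w i * MvPolynomial.eval x (h i))
    (ℓ : Fin d → MvPolynomial (Fin N) ℝ) (hℓdeg : ∀ i, (ℓ i).totalDegree ≤ 1)
    -- `H : E → ℝ^N` and `L : ℝ^N → ℝ^d` with `L ∘ H = id` on `E`, `H ∘ L = id` on `H(E)`
    (H : (Fin d → ℝ) → (Fin N → ℝ))
    (hH : ∀ x, H x = fun j : Fin N => MvPolynomial.eval x (h j))
    (L : (Fin N → ℝ) → (Fin d → ℝ))
    (hL : ∀ y, L y = fun i : Fin d => MvPolynomial.eval y (ℓ i))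
    (hLH : ∀ x ∈ E, L (H x) = x)
    (hHL : ∀ y ∈ H '' E, H (L y) = y)
    (m : ℕ) :
    -- `H*` maps `Pol_m(H(E))` into `Pol_{mn}(E)`
    (∀ f : MvPolynomial (Fin N) ℝ, f.totalDegree ≤ m →
      ∃ p : MvPolynomial (Fin d) ℝ, p.totalDegree ≤ m * n ∧
        ∀ x ∈ E, MvPolynomial.eval x p = MvPolynomial.eval (H x) f) ∧
    -- `H*` is injective as a map on restrictions (polynomials agreeing on `E` after
    -- pullback agree on `H(E)`)
    (∀ f₁ f₂ : MvPolynomial (Fin N) ℝ, f₁.totalDegree ≤ m → f₂.totalDegree ≤ m →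
      (∀ x ∈ E, MvPolynomial.eval (H x) f₁ = MvPolynomial.eval (H x) f₂) →
      ∀ y ∈ H '' E, MvPolynomial.eval y f₁ = MvPolynomial.eval y f₂) ∧
    -- `H*` is surjective onto `Pol_{mn}(E)`
    (∀ p : MvPolynomial (Fin d) ℝ, p.totalDegree ≤ m * n →
      ∃ f : MvPolynomial (Fin N) ℝ, f.totalDegree ≤ m ∧
        ∀ x ∈ E, MvPolynomial.eval (H x) f = MvPolynomial.eval x p) ∧
    -- `L*` is a two-sided inverse: `L*H* = id` on `Pol_m(H(E))`, `H*L* = id` on `Pol_{mn}(E)`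
    (∀ f : MvPolynomial (Fin N) ℝ, f.totalDegree ≤ m →
      ∀ y ∈ H '' E, MvPolynomial.eval (H (L y)) f = MvPolynomial.eval y f) ∧
    (∀ p : MvPolynomial (Fin d) ℝ, p.totalDegree ≤ m * n →
      ∀ x ∈ E, MvPolynomial.eval (L (H x)) p = MvPolynomial.eval x p) :=
  stmt11_general E h hdeg hspan H hH L hLH hHL m

end
end

section
/- Let 𝒢 be a jump-diffusion operator that is polynomial on E, and let f ∈ C^k(ℝ^d) satisfy |f(x)| ≤ c(1 + ‖x‖^k) on ℝ^d for some constant c and integer k ≥ 2. Then 𝒢f(x) is well-defined and locally bounded on E. In particular, the Taylor remainder g(x,ξ) = f(x+ξ) − Σ_{|α|≤k−1} (∂^α f(x)/α!) ξ^α satisfies |g(x,ξ)| ≤ ‖ξ‖^k M(x) for all ξ ∈ ℝ^d, for some continuous function M on ℝ^d. -/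
/-!
For `‖ξ‖ ≤ 1`, Taylor's theorem on the segment `[x, x + ξ]` bounds the remainder by `‖ξ‖ ^ k`
times the supremum of `‖D^k f‖` on the unit ball around `x`, which is continuous in `x`; for
`‖ξ‖ ≥ 1` the growth bound on `f` gives the same order.

Local boundedness of `𝒢f` on `E` reduces to local boundedness of `a`, `b` and the moments
`∫ ‖ξ‖ ^ n ν(y, dξ)`. Applying `𝒢` to `z_i` and `z_i ^ 2` shows that `b_i` and
`a_ii + ∫ ξ_i ^ 2 ν(y, dξ)` agree with polynomials on `E`; both summands are nonnegative and
`|a_ij| ≤ (a_ii + a_jj) / 2`. Higher moments come from `𝒢` applied to `|z - x| ^ (2m)`: its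
diffusion and drift parts are already bounded, and near its minimum point `x` its jump
integrand dominates `4⁻ᵐ ‖ξ‖ ^ (2m) - C ‖ξ‖ ^ 2`.
-/

open MeasureTheory MvPolynomial Filter Set

noncomputable section

open Asymptotics Topology

theorem pow_le_pow_add_pow {t : ℝ} (ht : 0 ≤ t) {i j n : ℕ} (hij : i ≤ j) (hjn : j ≤ n) :
    t ^ j ≤ t ^ i + t ^ n := by
  rcases le_total t 1 with h | h
  · linarith [pow_le_pow_of_le_one ht h hij, pow_nonneg ht n]
  · linarith [pow_le_pow_right₀ h hjn, pow_nonneg ht i]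

theorem Matrix.PosSemidef.abs_apply_le {n : Type*} [Fintype n] [DecidableEq n]
    {A : Matrix n n ℝ} (hA : A.PosSemidef) (i j : n) : |A i j| ≤ (A i i + A j j) / 2 := by
  have hquad : ∀ s : ℝ, 0 ≤ A i i + s * A i j + s * A j i + s * s * A j j := fun s => by
    have h := hA.dotProduct_mulVec_nonneg (Pi.single i 1 + Pi.single j s)
    simp only [star_trivial, mulVec_add, mulVec_single, MulOpposite.op_one, one_smul,
      op_smul_eq_smul, dotProduct_add, add_dotProduct, single_dotProduct, col_apply, one_mul,
      dotProduct_smul, smul_eq_mul] at h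
    linarith
  have hsymm : A i j = A j i := by simpa using congrFun (congrFun hA.isHermitian j) i
  rw [abs_le]
  constructor <;> nlinarith [hquad 1, hquad (-1)]

theorem pi_norm_sq_le_sum_sq {d : ℕ} (u : Fin d → ℝ) : ‖u‖ ^ 2 ≤ ∑ i, u i ^ 2 := by
  have h : ‖u‖ ≤ √(∑ i, u i ^ 2) := (pi_norm_le_iff_of_nonneg (Real.sqrt_nonneg _)).2 fun i =>
    Real.abs_le_sqrt (Finset.single_le_sum (fun j _ => sq_nonneg (u j)) (Finset.mem_univ i))
  exact (Real.le_sqrt (norm_nonneg _) (by positivity)).1 h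

theorem Continuous.exists_continuous_forall_closedBall_le {E : Type*} [SeminormedAddCommGroup E]
    [ProperSpace E] {F : E → ℝ} (hF : Continuous F) (r : ℝ) :
    ∃ S : E → ℝ, Continuous S ∧ ∀ x, ∀ y ∈ Metric.closedBall x r, F y ≤ S x := by
  have hK := isCompact_closedBall (0 : E) r
  refine ⟨fun x => sSup ((fun u => F (x + u)) '' Metric.closedBall 0 r),
    hK.continuous_sSup (hF.comp (continuous_fst.add continuous_snd)), fun x y hy => ?_⟩
  refine le_csSup ((hK.image (hF.comp (continuous_const_add x))).bddAbove) ⟨y - x, ?_, ?_⟩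
  · simpa [dist_eq_norm] using hy
  · simp

theorem abs_apply_add_le_of_growth {E : Type*} [SeminormedAddCommGroup E] {f : E → ℝ} {k : ℕ}
    {c : ℝ} (hc : 0 ≤ c) (hgrowth : ∀ z, |f z| ≤ c * (1 + ‖z‖ ^ k)) (x : E) {ξ : E} (hξ : 1 ≤ ‖ξ‖) :
    |f (x + ξ)| ≤ c * (1 + (1 + ‖x‖) ^ k) * ‖ξ‖ ^ k := by
  have hxξ : ‖x + ξ‖ ≤ (1 + ‖x‖) * ‖ξ‖ := by
    nlinarith [norm_add_le x ξ, norm_nonneg x]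
  calc |f (x + ξ)| ≤ c * (1 + ‖x + ξ‖ ^ k) := hgrowth _
    _ ≤ c * (‖ξ‖ ^ k + (1 + ‖x‖) ^ k * ‖ξ‖ ^ k) := by
      gcongr
      · exact one_le_pow₀ hξ
      · rw [← mul_pow]; gcongr
    _ = c * (1 + (1 + ‖x‖) ^ k) * ‖ξ‖ ^ k := by ring

section Taylor

variable {V : Type*} [NormedAddCommGroup V] [NormedSpace ℝ V]

def taylorPoly (f : V → ℝ) (n : ℕ) (x ξ : V) : ℝ :=
  ∑ j ∈ Finset.range n, (1 / (j.factorial : ℝ)) * iteratedFDeriv ℝ j f x (fun _ => ξ)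

theorem iteratedDeriv_comp_add_smul {f : V → ℝ} {n : ℕ} (hf : ContDiff ℝ n f) {j : ℕ}
    (hj : j ≤ n) (x ξ : V) (t : ℝ) :
    iteratedDeriv j (fun s : ℝ => f (x + s • ξ)) t =
      iteratedFDeriv ℝ j f (x + t • ξ) (fun _ => ξ) := by
  have hfx : ContDiff ℝ n (fun z => f (x + z)) := hf.comp (contDiff_const.add contDiff_id)
  rw [iteratedDeriv_eq_iteratedFDeriv, show (fun s : ℝ => f (x + s • ξ)) =
      (fun z => f (x + z)) ∘ ContinuousLinearMap.toSpanSingleton ℝ ξ from rfl,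
    ContinuousLinearMap.iteratedFDeriv_comp_right _ hfx _ (by exact_mod_cast hj),
    iteratedFDeriv_comp_add_left]
  simp

theorem abs_iteratedFDeriv_apply_const_le (f : V → ℝ) (j : ℕ) (x ξ : V) :
    |iteratedFDeriv ℝ j f x (fun _ => ξ)| ≤ ‖iteratedFDeriv ℝ j f x‖ * ‖ξ‖ ^ j := by
  simpa using (iteratedFDeriv ℝ j f x).le_opNorm (fun _ => ξ)

theorem abs_sub_taylorPoly_le {f : V → ℝ} {n : ℕ} (hf : ContDiff ℝ (n + 1) f) {x ξ : V}
    {C : ℝ} (hC : ∀ t ∈ Icc (0 : ℝ) 1, ‖iteratedFDeriv ℝ (n + 1) f (x + t • ξ)‖ ≤ C) :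
    |f (x + ξ) - taylorPoly f (n + 1) x ξ| ≤ C * ‖ξ‖ ^ (n + 1) := by
  set g : ℝ → ℝ := fun t => f (x + t • ξ)
  have hg : ContDiff ℝ (n + 1) g := hf.comp (contDiff_const.add (contDiff_id.smul contDiff_const))
  have hderiv : ∀ j ≤ n + 1, ∀ t ∈ Icc (0 : ℝ) 1, iteratedDerivWithin j g (Icc 0 1) t =
      iteratedFDeriv ℝ j f (x + t • ξ) (fun _ => ξ) := fun j hj t ht => by
    rw [iteratedDerivWithin_eq_iteratedDeriv (uniqueDiffOn_Icc zero_lt_one)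
      (hg.contDiffAt.of_le (by exact_mod_cast hj)) ht,
      iteratedDeriv_comp_add_smul (n := n + 1) (by exact_mod_cast hf) hj]
  have hC' : ∀ t ∈ Icc (0 : ℝ) 1,
      ‖iteratedDerivWithin (n + 1) g (Icc 0 1) t‖ ≤ C * ‖ξ‖ ^ (n + 1) := fun t ht => by
    rw [hderiv _ le_rfl t ht, Real.norm_eq_abs]
    exact (abs_iteratedFDeriv_apply_const_le f _ _ ξ).trans
      (mul_le_mul_of_nonneg_right (hC t ht) (by positivity))
  have htaylor : taylorWithinEval g n (Icc 0 1) 0 1 = taylorPoly f (n + 1) x ξ := by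
    rw [taylor_within_apply, taylorPoly]
    refine Finset.sum_congr rfl fun j hj => ?_
    rw [hderiv j (by simp at hj; omega) 0 (by simp)]
    simp [div_eq_inv_mul]
  have h := taylor_mean_remainder_bound zero_le_one hg.contDiffOn (by simp : (1 : ℝ) ∈ Icc 0 1) hC'
  rw [htaylor, show g 1 = f (x + ξ) by simp [g], Real.norm_eq_abs, sub_zero, one_pow,
    mul_one] at h
  have hC0 : 0 ≤ C := (norm_nonneg _).trans (hC 0 (by simp))
  exact h.trans (div_le_self (by positivity) (mod_cast n.factorial_pos))

theorem exists_continuous_abs_sub_taylorPoly_le_of_norm_le_one [ProperSpace V] {f : V → ℝ}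
    {n : ℕ} (hf : ContDiff ℝ (n + 1) f) :
    ∃ M : V → ℝ, Continuous M ∧
      ∀ x ξ : V, ‖ξ‖ ≤ 1 → |f (x + ξ) - taylorPoly f (n + 1) x ξ| ≤ M x * ‖ξ‖ ^ (n + 1) := by
  obtain ⟨S, hS, hle⟩ :=
    (hf.continuous_iteratedFDeriv le_rfl).norm.exists_continuous_forall_closedBall_le 1
  refine ⟨S, hS, fun x ξ hξ => abs_sub_taylorPoly_le hf fun t ht => hle x _ ?_⟩
  rw [Metric.mem_closedBall, dist_eq_norm, add_sub_cancel_left, norm_smul, Real.norm_eq_abs,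
    abs_of_nonneg ht.1]
  exact mul_le_one₀ ht.2 (norm_nonneg _) hξ

theorem abs_taylorPoly_le (f : V → ℝ) (n : ℕ) (x ξ : V) :
    |taylorPoly f n x ξ| ≤ ∑ j ∈ Finset.range n, ‖iteratedFDeriv ℝ j f x‖ * ‖ξ‖ ^ j := by
  refine (Finset.abs_sum_le_sum_abs _ _).trans (Finset.sum_le_sum fun j _ => ?_)
  rw [abs_mul, abs_of_nonneg (by positivity)]
  refine (mul_le_of_le_one_left (abs_nonneg _) ?_).trans
    (abs_iteratedFDeriv_apply_const_le f j x ξ)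
  exact div_le_one_of_le₀ (mod_cast j.factorial_pos) (by positivity)

theorem exists_continuous_abs_sub_taylorPoly_le [ProperSpace V] {f : V → ℝ} {n k : ℕ}
    (hf : ContDiff ℝ n f) (hn : n ≠ 0) (hnk : n ≤ k) {c : ℝ}
    (hgrowth : ∀ z, |f z| ≤ c * (1 + ‖z‖ ^ k)) :
    ∃ M : V → ℝ, Continuous M ∧ (∀ x, 0 ≤ M x) ∧
      ∀ x ξ : V, |f (x + ξ) - taylorPoly f n x ξ| ≤ M x * (‖ξ‖ ^ n + ‖ξ‖ ^ k) := by
  have hc : 0 ≤ c := by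
    have : (0 : ℝ) < 1 + ‖(0 : V)‖ ^ k := by positivity
    nlinarith [abs_nonneg (f 0), hgrowth 0]
  obtain ⟨m, rfl⟩ := Nat.exists_eq_succ_of_ne_zero hn
  obtain ⟨M₁, hM₁, hlocal⟩ := exists_continuous_abs_sub_taylorPoly_le_of_norm_le_one
    (n := m) (by exact_mod_cast hf)
  set B : V → ℝ := fun x =>
    c * (1 + (1 + ‖x‖) ^ k) + ∑ j ∈ Finset.range (m + 1), ‖iteratedFDeriv ℝ j f x‖
  have hB : ∀ x, 0 ≤ B x := fun x => by positivity
  refine ⟨fun x => |M₁ x| + B x, ?_, fun x => by positivity, fun x ξ => ?_⟩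
  · refine hM₁.abs.add (Continuous.add (by fun_prop) (continuous_finsetSum _ fun j hj => ?_))
    exact (hf.continuous_iteratedFDeriv (by exact_mod_cast (Finset.mem_range.mp hj).le)).norm
  rcases le_total ‖ξ‖ 1 with hξ | hξ
  · calc _ ≤ M₁ x * ‖ξ‖ ^ (m + 1) := hlocal x ξ hξ
      _ ≤ (|M₁ x| + B x) * (‖ξ‖ ^ (m + 1) + ‖ξ‖ ^ k) := by
        gcongr
        · linarith [le_abs_self (M₁ x), hB x]
        · exact le_add_of_nonneg_right (by positivity)
  · have hpoly : |taylorPoly f (m + 1) x ξ| ≤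
        (∑ j ∈ Finset.range (m + 1), ‖iteratedFDeriv ℝ j f x‖) * ‖ξ‖ ^ k := by
      rw [Finset.sum_mul]
      refine (abs_taylorPoly_le f _ x ξ).trans (Finset.sum_le_sum fun j hj => ?_)
      gcongr
      exact (Finset.mem_range.mp hj).le.trans hnk
    calc _ ≤ |f (x + ξ)| + |taylorPoly f (m + 1) x ξ| := abs_sub _ _
      _ ≤ B x * ‖ξ‖ ^ k := by
        have := abs_apply_add_le_of_growth hc hgrowth x hξ
        simp only [B]; linarith
      _ ≤ (|M₁ x| + B x) * (‖ξ‖ ^ (m + 1) + ‖ξ‖ ^ k) := by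
        gcongr
        · exact le_add_of_nonneg_left (abs_nonneg _)
        · exact le_add_of_nonneg_left (by positivity)

end Taylor

section IsBigOOne

variable {α : Type*} {l : Filter α}

theorem isBigO_one_of_eventually_abs_le {F G : α → ℝ} (hG : G =O[l] fun _ => (1 : ℝ))
    (h : ∀ᶠ y in l, |F y| ≤ G y) : F =O[l] fun _ => (1 : ℝ) :=
  (IsBigO.of_bound' (h.mono fun y hy => by
    simpa only [Real.norm_eq_abs] using hy.trans (le_abs_self _))).trans hG

theorem Asymptotics.IsBigO.mul_isBigO_one {F G : α → ℝ} (hF : F =O[l] fun _ => (1 : ℝ))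
    (hG : G =O[l] fun _ => (1 : ℝ)) : (fun y => F y * G y) =O[l] fun _ => (1 : ℝ) := by
  simpa using hF.mul hG

theorem Continuous.isBigO_one_nhdsWithin {X : Type*} [TopologicalSpace X] {g : X → ℝ}
    (hg : Continuous g) (s : Set X) (x : X) : g =O[𝓝[s] x] fun _ => (1 : ℝ) :=
  (hg.continuousAt.tendsto.mono_left nhdsWithin_le_nhds).isBigO_one ℝ

theorem exists_mem_nhds_forall_abs_le_of_isBigO_one {X : Type*} [TopologicalSpace X]
    {F : X → ℝ} {s : Set X} {x : X} (h : F =O[𝓝[s] x] fun _ => (1 : ℝ)) :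
    ∃ U ∈ 𝓝 x, ∃ C : ℝ, ∀ y ∈ U ∩ s, |F y| ≤ C := by
  obtain ⟨C, hC⟩ := (isBigO_one_iff ℝ).1 h
  obtain ⟨U, hU, hUs⟩ := mem_nhdsWithin_iff_exists_mem_nhds_inter.1 (eventually_map.1 hC)
  exact ⟨U, hU, C, fun y hy => hUs hy⟩

end IsBigOOne

section JumpDiffusion

variable {d : ℕ}

theorem ContinuousLinearMap.sum_mul_apply_single (L : (Fin d → ℝ) →L[ℝ] ℝ) (ξ : Fin d → ℝ) :
    ∑ i, ξ i * L (Pi.single i 1) = L ξ := by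
  conv_rhs => rw [← Finset.univ_sum_single ξ, map_sum]
  refine Finset.sum_congr rfl fun i _ => ?_
  rw [← smul_eq_mul, ← map_smul, ← Pi.single_smul', smul_eq_mul, mul_one]

def jumpIntegrand (f : (Fin d → ℝ) → ℝ) (x ξ : Fin d → ℝ) : ℝ :=
  f (x + ξ) - f x - ∑ i, ξ i * fderiv ℝ f x (Pi.single i 1)

def diffusionDrift (a : (Fin d → ℝ) → Matrix (Fin d) (Fin d) ℝ) (b : (Fin d → ℝ) → Fin d → ℝ)
    (f : (Fin d → ℝ) → ℝ) (x : Fin d → ℝ) : ℝ :=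
  (1 / 2) * ∑ i, ∑ j, a x i j *
      fderiv ℝ (fun y => fderiv ℝ f y (Pi.single j 1)) x (Pi.single i 1)
    + ∑ i, b x i * fderiv ℝ f x (Pi.single i 1)

theorem jdOp_eq_diffusionDrift_add_integral (a : (Fin d → ℝ) → Matrix (Fin d) (Fin d) ℝ)
    (b : (Fin d → ℝ) → Fin d → ℝ) (ν : (Fin d → ℝ) → Measure (Fin d → ℝ))
    (f : (Fin d → ℝ) → ℝ) (x : Fin d → ℝ) :
    jdOp a b ν f x = diffusionDrift a b f x + ∫ ξ, jumpIntegrand f x ξ ∂ν x :=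
  rfl

theorem jumpIntegrand_eq_fderiv (f : (Fin d → ℝ) → ℝ) (x ξ : Fin d → ℝ) :
    jumpIntegrand f x ξ = f (x + ξ) - f x - fderiv ℝ f x ξ := by
  rw [jumpIntegrand, ContinuousLinearMap.sum_mul_apply_single]

theorem jumpIntegrand_eq_sub_taylorPoly (f : (Fin d → ℝ) → ℝ) (x ξ : Fin d → ℝ) :
    jumpIntegrand f x ξ = f (x + ξ) - taylorPoly f 2 x ξ := by
  rw [jumpIntegrand_eq_fderiv]
  simp [taylorPoly, Finset.sum_range_succ, sub_sub]

theorem exists_continuous_abs_jumpIntegrand_le {f : (Fin d → ℝ) → ℝ} {k : ℕ}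
    (hf : ContDiff ℝ k f) (hk : 2 ≤ k) {c : ℝ} (hgrowth : ∀ z, |f z| ≤ c * (1 + ‖z‖ ^ k)) :
    ∃ W : (Fin d → ℝ) → ℝ, Continuous W ∧ (∀ x, 0 ≤ W x) ∧
      ∀ x ξ, |jumpIntegrand f x ξ| ≤ W x * (‖ξ‖ ^ 2 + ‖ξ‖ ^ k) := by
  simpa only [jumpIntegrand_eq_sub_taylorPoly] using
    exists_continuous_abs_sub_taylorPoly_le (hf.of_le (mod_cast hk)) two_ne_zero hk hgrowth

theorem integrable_jumpIntegrand {f : (Fin d → ℝ) → ℝ} (hf : Continuous f) {k : ℕ}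
    {W : (Fin d → ℝ) → ℝ} (hW : ∀ x ξ, |jumpIntegrand f x ξ| ≤ W x * (‖ξ‖ ^ 2 + ‖ξ‖ ^ k))
    {μ : Measure (Fin d → ℝ)} (h2 : Integrable (fun ξ => ‖ξ‖ ^ 2) μ)
    (hk : Integrable (fun ξ => ‖ξ‖ ^ k) μ) (x : Fin d → ℝ) :
    Integrable (jumpIntegrand f x) μ := by
  refine ((h2.add hk).const_mul (W x)).mono' ?_ (Eventually.of_forall fun ξ => hW x ξ)
  refine Continuous.aestronglyMeasurable ?_
  unfold jumpIntegrand
  fun_prop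

theorem fderiv_apply_coord (i : Fin d) :
    fderiv ℝ (fun z : Fin d → ℝ => z i) = fun _ => ContinuousLinearMap.proj i :=
  funext fun y => (hasFDerivAt_apply i y).fderiv

theorem fderiv_apply_coord_sq (i : Fin d) :
    fderiv ℝ (fun z : Fin d → ℝ => z i ^ 2) = fun y => (2 * y i) • ContinuousLinearMap.proj i :=
  funext fun y => by simp [((hasFDerivAt_apply (𝕜 := ℝ) (F' := fun _ => ℝ) i y).pow 2).fderiv]

variable (a : (Fin d → ℝ) → Matrix (Fin d) (Fin d) ℝ) (b : (Fin d → ℝ) → Fin d → ℝ)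
  (ν : (Fin d → ℝ) → Measure (Fin d → ℝ))

theorem jdOp_coord (i : Fin d) (y : Fin d → ℝ) : jdOp a b ν (fun z => z i) y = b y i := by
  simp [jdOp, fderiv_apply_coord, Pi.single_apply]

theorem jdOp_coord_sq (i : Fin d) (y : Fin d → ℝ) :
    jdOp a b ν (fun z => z i ^ 2) y = a y i i + 2 * (b y i * y i) + ∫ ξ, ξ i ^ 2 ∂ν y := by
  have h2 : ∀ j, (fun w => fderiv ℝ (fun z : Fin d → ℝ => z i ^ 2) w (Pi.single j 1)) =
      ⇑((2 * Pi.single (M := fun _ => ℝ) j 1 i) • ContinuousLinearMap.proj (R := ℝ) i) := by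
    intro j; ext w
    simp only [fderiv_apply_coord_sq, smul_apply, ContinuousLinearMap.proj_apply, smul_eq_mul]
    ring
  have hjump : ∀ ξ : Fin d → ℝ, (y i + ξ i) ^ 2 - y i ^ 2 - ξ i * (2 * y i) = ξ i ^ 2 :=
    fun ξ => by ring
  simp only [jdOp, h2, ContinuousLinearMap.fderiv]
  simp only [smul_apply, ContinuousLinearMap.proj_apply, smul_eq_mul, Pi.add_apply, hjump,
    fderiv_apply_coord_sq, Pi.single_apply, mul_ite, mul_one, mul_zero, Finset.sum_ite_eq,
    Finset.sum_ite_irrel, Finset.sum_const_zero, Finset.mem_univ, if_true]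
  ring

def MapsPolynomialsOn (E : Set (Fin d → ℝ)) : Prop :=
  ∀ p : MvPolynomial (Fin d) ℝ, ∃ r : MvPolynomial (Fin d) ℝ,
    ∀ y ∈ E, eval y r = jdOp a b ν (fun z => eval z p) y

variable {a b ν} {E : Set (Fin d → ℝ)}

theorem MapsPolynomialsOn.isBigO_one (hP : MapsPolynomialsOn a b ν E)
    (p : MvPolynomial (Fin d) ℝ) (x : Fin d → ℝ) :
    jdOp a b ν (fun z => eval z p) =O[𝓝[E] x] fun _ => (1 : ℝ) := by
  obtain ⟨r, hr⟩ := hP p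
  refine ((continuous_eval r).isBigO_one_nhdsWithin E x).congr' ?_ EventuallyEq.rfl
  filter_upwards [self_mem_nhdsWithin] with y hy using hr y hy

theorem MapsPolynomialsOn.drift_isBigO_one (hP : MapsPolynomialsOn a b ν E) (i : Fin d)
    (x : Fin d → ℝ) : (fun y => b y i) =O[𝓝[E] x] fun _ => (1 : ℝ) := by
  simpa [jdOp_coord] using hP.isBigO_one (X i) x

theorem MapsPolynomialsOn.diag_add_integral_sq_isBigO_one (hP : MapsPolynomialsOn a b ν E)
    (i : Fin d) (x : Fin d → ℝ) :
    (fun y => a y i i + ∫ ξ, ξ i ^ 2 ∂ν y) =O[𝓝[E] x] fun _ => (1 : ℝ) := by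
  have hb := ((hP.drift_isBigO_one i x).mul_isBigO_one
    ((continuous_apply i).isBigO_one_nhdsWithin E x)).const_mul_left 2
  refine ((hP.isBigO_one (X i ^ 2) x).sub hb).congr_left fun y => ?_
  simp only [map_pow, eval_X, jdOp_coord_sq]
  ring

theorem MapsPolynomialsOn.diffusion_isBigO_one (hP : MapsPolynomialsOn a b ν E)
    (hpsd : ∀ y, (a y).PosSemidef) (i j : Fin d) (x : Fin d → ℝ) :
    (fun y => a y i j) =O[𝓝[E] x] fun _ => (1 : ℝ) := by
  have hdiag : ∀ l, (fun y => a y l l) =O[𝓝[E] x] fun _ => (1 : ℝ) := fun l =>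
    isBigO_one_of_eventually_abs_le (hP.diag_add_integral_sq_isBigO_one l x)
      (Eventually.of_forall fun y => by
        rw [abs_of_nonneg (hpsd y).diag_nonneg]
        exact le_add_of_nonneg_right (integral_nonneg fun ξ => sq_nonneg _))
  refine isBigO_one_of_eventually_abs_le (((hdiag i).add (hdiag j)).const_mul_left (1 / 2))
    (Eventually.of_forall fun y => ?_)
  linarith [(hpsd y).abs_apply_le i j]

theorem MapsPolynomialsOn.integral_norm_sq_isBigO_one (hP : MapsPolynomialsOn a b ν E)
    (hpsd : ∀ y, (a y).PosSemidef)
    (hmom2 : ∀ y ∈ E, Integrable (fun ξ => ‖ξ‖ ^ 2) (ν y)) (x : Fin d → ℝ) :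
    (fun y => ∫ ξ, ‖ξ‖ ^ 2 ∂ν y) =O[𝓝[E] x] fun _ => (1 : ℝ) := by
  have hsum : (fun y => ∑ i, (a y i i + ∫ ξ, ξ i ^ 2 ∂ν y)) =O[𝓝[E] x] fun _ => (1 : ℝ) :=
    IsBigO.fun_sum fun i _ => hP.diag_add_integral_sq_isBigO_one i x
  refine isBigO_one_of_eventually_abs_le hsum ?_
  filter_upwards [self_mem_nhdsWithin] with y hy
  have hsq : ∀ i, Integrable (fun ξ : Fin d → ℝ => ξ i ^ 2) (ν y) := fun i =>
    (hmom2 y hy).mono' ((continuous_apply i).pow 2).aestronglyMeasurable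
      (Eventually.of_forall fun ξ => by
        rw [norm_pow]; exact pow_le_pow_left₀ (norm_nonneg _) (norm_le_pi_norm ξ i) 2)
  rw [abs_of_nonneg (integral_nonneg fun ξ => by positivity)]
  calc ∫ ξ, ‖ξ‖ ^ 2 ∂ν y ≤ ∫ ξ, ∑ i, ξ i ^ 2 ∂ν y :=
        integral_mono (hmom2 y hy) (integrable_finsetSum _ fun i _ => hsq i) pi_norm_sq_le_sum_sq
    _ = ∑ i, ∫ ξ, ξ i ^ 2 ∂ν y := integral_finsetSum _ fun i _ => hsq i
    _ ≤ ∑ i, (a y i i + ∫ ξ, ξ i ^ 2 ∂ν y) :=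
        Finset.sum_le_sum fun i _ => le_add_of_nonneg_left (hpsd y).diag_nonneg

theorem diffusionDrift_isBigO_one {g : (Fin d → ℝ) → ℝ} (hg : ContDiff ℝ 2 g) {x : Fin d → ℝ}
    (ha : ∀ i j, (fun y => a y i j) =O[𝓝[E] x] fun _ => (1 : ℝ))
    (hb : ∀ i, (fun y => b y i) =O[𝓝[E] x] fun _ => (1 : ℝ)) :
    diffusionDrift a b g =O[𝓝[E] x] fun _ => (1 : ℝ) := by
  have hD : ∀ j, ContDiff ℝ 1 (fun w => fderiv ℝ g w (Pi.single j 1)) := fun j =>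
    (hg.fderiv_right (m := 1) (by norm_num)).clm_apply contDiff_const
  refine ((IsBigO.fun_sum fun i _ => IsBigO.fun_sum fun j _ =>
    (ha i j).mul_isBigO_one ?_).const_mul_left _).add
    (IsBigO.fun_sum fun i _ => (hb i).mul_isBigO_one ?_)
  · exact (((hD j).continuous_fderiv one_ne_zero).clm_apply continuous_const).isBigO_one_nhdsWithin
      E x
  · exact (hD i).continuous.isBigO_one_nhdsWithin E x

/-- `sqDistPow x m z = |z - x| ^ (2 * m)` for the Euclidean norm `|·|`, a polynomial in `z`
(the norm `‖·‖` on `Fin d → ℝ` is the sup norm). -/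
def sqDistPow (x : Fin d → ℝ) (m : ℕ) (z : Fin d → ℝ) : ℝ :=
  (∑ i, (z i - x i) ^ 2) ^ m

theorem sqDistPow_eq_eval (x : Fin d → ℝ) (m : ℕ) :
    sqDistPow x m = fun z => eval z ((∑ i, (X i - C (x i)) ^ 2) ^ m) := by
  funext z; simp [sqDistPow]

theorem contDiff_sqDistPow (x : Fin d → ℝ) (m : ℕ) {n : WithTop ℕ∞} :
    ContDiff ℝ n (sqDistPow x m) := by
  unfold sqDistPow; fun_prop

theorem sqDistPow_nonneg (x : Fin d → ℝ) (m : ℕ) (z : Fin d → ℝ) : 0 ≤ sqDistPow x m z := by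
  unfold sqDistPow; positivity

theorem sqDistPow_self (x : Fin d → ℝ) {m : ℕ} (hm : m ≠ 0) : sqDistPow x m x = 0 := by
  simp [sqDistPow, hm]

theorem norm_sub_pow_le_sqDistPow (x : Fin d → ℝ) (m : ℕ) (z : Fin d → ℝ) :
    ‖z - x‖ ^ (2 * m) ≤ sqDistPow x m z := by
  rw [pow_mul]
  exact pow_le_pow_left₀ (sq_nonneg _) (by simpa using pi_norm_sq_le_sum_sq (z - x)) m

theorem sqDistPow_le (x : Fin d → ℝ) (m : ℕ) (z : Fin d → ℝ) :
    sqDistPow x m z ≤ (d : ℝ) ^ m * ‖z - x‖ ^ (2 * m) := by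
  rw [pow_mul, ← mul_pow, sqDistPow]
  gcongr
  calc ∑ i, (z i - x i) ^ 2 ≤ ∑ _i : Fin d, ‖z - x‖ ^ 2 := Finset.sum_le_sum fun i _ =>
        (sq_abs _).symm.trans_le
          (pow_le_pow_left₀ (abs_nonneg _) (by simpa using norm_le_pi_norm (z - x) i) 2)
    _ = d * ‖z - x‖ ^ 2 := by simp

theorem exists_abs_sqDistPow_le (x : Fin d → ℝ) (m : ℕ) :
    ∃ c : ℝ, ∀ z, |sqDistPow x m z| ≤ c * (1 + ‖z‖ ^ (2 * m)) := by
  refine ⟨(d : ℝ) ^ m * 2 ^ (2 * m) * (1 + ‖x‖ ^ (2 * m)), fun z => ?_⟩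
  have hA : 0 ≤ ‖z‖ ^ (2 * m) := by positivity
  have hB : 0 ≤ ‖x‖ ^ (2 * m) := by positivity
  have hsub : ‖z - x‖ ^ (2 * m) ≤ 2 ^ (2 * m) * (‖z‖ ^ (2 * m) + ‖x‖ ^ (2 * m)) :=
    calc ‖z - x‖ ^ (2 * m) ≤ (‖z‖ + ‖x‖) ^ (2 * m) := by gcongr; exact norm_sub_le z x
      _ ≤ 2 ^ (2 * m - 1) * (‖z‖ ^ (2 * m) + ‖x‖ ^ (2 * m)) :=
        add_pow_le (norm_nonneg _) (norm_nonneg _) _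
      _ ≤ 2 ^ (2 * m) * (‖z‖ ^ (2 * m) + ‖x‖ ^ (2 * m)) := by
        gcongr
        · norm_num
        · omega
  rw [abs_of_nonneg (sqDistPow_nonneg x m z)]
  calc sqDistPow x m z ≤ (d : ℝ) ^ m * ‖z - x‖ ^ (2 * m) := sqDistPow_le x m z
    _ ≤ (d : ℝ) ^ m * 2 ^ (2 * m) * (‖z‖ ^ (2 * m) + ‖x‖ ^ (2 * m)) := by
      rw [mul_assoc]; gcongr
    _ ≤ _ := by
      rw [mul_assoc _ (1 + _)]
      gcongr
      nlinarith

theorem fderiv_sqDistPow_self (x : Fin d → ℝ) {m : ℕ} (hm : m ≠ 0) :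
    fderiv ℝ (sqDistPow x m) x = 0 :=
  IsLocalMin.fderiv_eq_zero <| IsMinOn.isLocalMin (s := univ)
    (fun z _ => by simpa [sqDistPow_self x hm] using sqDistPow_nonneg x m z) univ_mem

theorem eventually_sqDistPow_small (x : Fin d → ℝ) {m : ℕ} (hm : m ≠ 0) :
    ∀ᶠ y in 𝓝 x,
      ‖y - x‖ ≤ 1 / 2 ∧ sqDistPow x m y ≤ 1 ∧ ‖fderiv ℝ (sqDistPow x m) y‖ ≤ 1 := by
  have hQ := (contDiff_sqDistPow x m (n := 1)).continuous
  have hDQ := ((contDiff_sqDistPow x m (n := 1)).continuous_fderiv one_ne_zero).norm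
  filter_upwards [(continuous_id.sub continuous_const).norm.continuousAt.eventually_lt
      continuousAt_const (by norm_num : ‖x - x‖ < 1 / 2),
    hQ.continuousAt.eventually_lt continuousAt_const
      (by simp [sqDistPow_self x hm] : sqDistPow x m x < 1),
    hDQ.continuousAt.eventually_lt continuousAt_const
      (by simp [fderiv_sqDistPow_self x hm] : ‖fderiv ℝ (sqDistPow x m) x‖ < 1)]
    with y h1 h2 h3 using ⟨h1.le, h2.le, h3.le⟩

/-- For large `ξ` the value `sqDistPow x m (y + ξ) ≥ (‖ξ‖ / 2) ^ (2 * m)` dominates the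
first-order terms at `y`, which are small as `y` is close to the minimum point `x`;
for small `ξ` the Taylor bound `hW` suffices. -/
theorem norm_pow_le_jumpIntegrand_sqDistPow {x y : Fin d → ℝ} {m : ℕ} (hm : m ≠ 0) {W : ℝ}
    (hW0 : 0 ≤ W)
    (hW : ∀ ξ, |jumpIntegrand (sqDistPow x m) y ξ| ≤ W * (‖ξ‖ ^ 2 + ‖ξ‖ ^ (2 * m)))
    (hy : ‖y - x‖ ≤ 1 / 2) (hQ : sqDistPow x m y ≤ 1)
    (hDQ : ‖fderiv ℝ (sqDistPow x m) y‖ ≤ 1) (ξ : Fin d → ℝ) :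
    ‖ξ‖ ^ (2 * m) ≤
      4 ^ m * jumpIntegrand (sqDistPow x m) y ξ + (1 + 2 * 4 ^ m * (1 + W)) * ‖ξ‖ ^ 2 := by
  have h4 : (0 : ℝ) < 4 ^ m := by positivity
  have hsq : 0 ≤ ‖ξ‖ ^ 2 := by positivity
  rcases le_total ‖ξ‖ 1 with hξ | hξ
  · have hpow : ‖ξ‖ ^ (2 * m) ≤ ‖ξ‖ ^ 2 := pow_le_pow_of_le_one (norm_nonneg _) hξ (by omega)
    have hJ := mul_le_mul_of_nonneg_left (neg_le_of_abs_le (hW ξ)) h4.le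
    have hWpow := mul_le_mul_of_nonneg_left (mul_le_mul_of_nonneg_left hpow hW0) h4.le
    nlinarith
  · have hfar : ‖ξ‖ ^ (2 * m) ≤ 4 ^ m * sqDistPow x m (y + ξ) :=
      calc ‖ξ‖ ^ (2 * m) ≤ (2 * ‖y + ξ - x‖) ^ (2 * m) := by
            have : ‖ξ‖ ≤ ‖y + ξ - x‖ + ‖y - x‖ :=
              calc ‖ξ‖ = ‖(y + ξ - x) - (y - x)‖ := by congr 1; abel
                _ ≤ _ := norm_sub_le _ _
            gcongr
            linarith
        _ = 4 ^ m * ‖y + ξ - x‖ ^ (2 * m) := by rw [mul_pow, pow_mul]; norm_num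
        _ ≤ 4 ^ m * sqDistPow x m (y + ξ) := by gcongr; exact norm_sub_pow_le_sqDistPow x m _
    have hlin : fderiv ℝ (sqDistPow x m) y ξ ≤ ‖ξ‖ ^ 2 :=
      calc fderiv ℝ (sqDistPow x m) y ξ ≤ ‖fderiv ℝ (sqDistPow x m) y‖ * ‖ξ‖ :=
            (le_abs_self _).trans ((fderiv ℝ (sqDistPow x m) y).le_opNorm ξ)
        _ ≤ ‖ξ‖ ^ 2 := by nlinarith [norm_nonneg ξ]
    have h1 : 1 ≤ ‖ξ‖ ^ 2 := one_le_pow₀ hξ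
    rw [jumpIntegrand_eq_fderiv]
    nlinarith [mul_nonneg (mul_nonneg h4.le hW0) hsq]

theorem MapsPolynomialsOn.integral_norm_pow_two_mul_isBigO_one (hP : MapsPolynomialsOn a b ν E)
    (hmom : ∀ y ∈ E, ∀ n : ℕ, 2 ≤ n → Integrable (fun ξ => ‖ξ‖ ^ n) (ν y)) {x : Fin d → ℝ}
    (ha : ∀ i j, (fun y => a y i j) =O[𝓝[E] x] fun _ => (1 : ℝ))
    (hb : ∀ i, (fun y => b y i) =O[𝓝[E] x] fun _ => (1 : ℝ))
    (h2 : (fun y => ∫ ξ, ‖ξ‖ ^ 2 ∂ν y) =O[𝓝[E] x] fun _ => (1 : ℝ)) {m : ℕ} (hm : m ≠ 0) :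
    (fun y => ∫ ξ, ‖ξ‖ ^ (2 * m) ∂ν y) =O[𝓝[E] x] fun _ => (1 : ℝ) := by
  obtain ⟨c, hc⟩ := exists_abs_sqDistPow_le x m
  obtain ⟨W, hWc, hW0, hW⟩ :=
    exists_continuous_abs_jumpIntegrand_le (contDiff_sqDistPow x m) (by omega) hc
  have hJ : (fun y => ∫ ξ, jumpIntegrand (sqDistPow x m) y ξ ∂ν y) =O[𝓝[E] x]
      fun _ => (1 : ℝ) := by
    refine ((hP.isBigO_one ((∑ i, (X i - C (x i)) ^ 2) ^ m) x).sub
      (diffusionDrift_isBigO_one (contDiff_sqDistPow x m) ha hb)).congr_left fun y => ?_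
    rw [← sqDistPow_eq_eval, jdOp_eq_diffusionDrift_add_integral]
    ring
  have hC : Continuous fun y => 1 + 2 * 4 ^ m * (1 + W y) := by fun_prop
  have hG := (hJ.const_mul_left (4 ^ m)).add ((hC.isBigO_one_nhdsWithin E x).mul_isBigO_one h2)
  refine isBigO_one_of_eventually_abs_le hG ?_
  filter_upwards [self_mem_nhdsWithin, nhdsWithin_le_nhds (eventually_sqDistPow_small x hm)]
    with y hy ⟨h1, h2, h3⟩
  have hJint := integrable_jumpIntegrand (contDiff_sqDistPow x m (n := 0)).continuous hW
    (hmom y hy 2 le_rfl) (hmom y hy (2 * m) (by omega)) y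
  rw [abs_of_nonneg (integral_nonneg fun _ => by positivity), ← integral_const_mul,
    ← integral_const_mul, ← integral_add (hJint.const_mul _) ((hmom y hy 2 le_rfl).const_mul _)]
  exact integral_mono (hmom y hy (2 * m) (by omega))
    ((hJint.const_mul _).add ((hmom y hy 2 le_rfl).const_mul _)) fun ξ =>
    norm_pow_le_jumpIntegrand_sqDistPow hm (hW0 y) (hW y) h1 h2 h3 ξ

theorem MapsPolynomialsOn.integral_norm_pow_isBigO_one (hP : MapsPolynomialsOn a b ν E)
    (hpsd : ∀ y, (a y).PosSemidef)
    (hmom : ∀ y ∈ E, ∀ n : ℕ, 2 ≤ n → Integrable (fun ξ => ‖ξ‖ ^ n) (ν y)) {n : ℕ} (hn : 2 ≤ n)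
    (x : Fin d → ℝ) : (fun y => ∫ ξ, ‖ξ‖ ^ n ∂ν y) =O[𝓝[E] x] fun _ => (1 : ℝ) := by
  have h2 := hP.integral_norm_sq_isBigO_one hpsd (fun y hy => hmom y hy 2 le_rfl) x
  have h2n := hP.integral_norm_pow_two_mul_isBigO_one hmom (hP.diffusion_isBigO_one hpsd · · x)
    (hP.drift_isBigO_one · x) h2 (m := n) (by omega)
  refine isBigO_one_of_eventually_abs_le (h2.add h2n) ?_
  filter_upwards [self_mem_nhdsWithin] with y hy
  rw [abs_of_nonneg (integral_nonneg fun _ => by positivity),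
    ← integral_add (hmom y hy 2 le_rfl) (hmom y hy (2 * n) (by omega))]
  exact integral_mono (hmom y hy n hn) ((hmom y hy 2 le_rfl).add (hmom y hy (2 * n) (by omega)))
    fun ξ => pow_le_pow_add_pow (norm_nonneg _) hn (by omega)

theorem integral_jumpIntegrand_isBigO_one {f : (Fin d → ℝ) → ℝ} (hf : Continuous f) {k : ℕ}
    {W : (Fin d → ℝ) → ℝ} (hWc : Continuous W)
    (hW : ∀ x ξ, |jumpIntegrand f x ξ| ≤ W x * (‖ξ‖ ^ 2 + ‖ξ‖ ^ k))
    (hmom2 : ∀ y ∈ E, Integrable (fun ξ => ‖ξ‖ ^ 2) (ν y))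
    (hmomk : ∀ y ∈ E, Integrable (fun ξ => ‖ξ‖ ^ k) (ν y)) {x : Fin d → ℝ}
    (h2 : (fun y => ∫ ξ, ‖ξ‖ ^ 2 ∂ν y) =O[𝓝[E] x] fun _ => (1 : ℝ))
    (hk : (fun y => ∫ ξ, ‖ξ‖ ^ k ∂ν y) =O[𝓝[E] x] fun _ => (1 : ℝ)) :
    (fun y => ∫ ξ, jumpIntegrand f y ξ ∂ν y) =O[𝓝[E] x] fun _ => (1 : ℝ) := by
  refine isBigO_one_of_eventually_abs_le ((hWc.isBigO_one_nhdsWithin E x).mul_isBigO_one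
    (h2.add hk)) ?_
  filter_upwards [self_mem_nhdsWithin] with y hy
  rw [← integral_add (hmom2 y hy) (hmomk y hy), ← integral_const_mul, ← Real.norm_eq_abs]
  exact (norm_integral_le_integral_norm _).trans (integral_mono
    (integrable_jumpIntegrand hf hW (hmom2 y hy) (hmomk y hy) y).norm
    (((hmom2 y hy).add (hmomk y hy)).const_mul _) (hW y))

theorem MapsPolynomialsOn.jdOp_isBigO_one (hP : MapsPolynomialsOn a b ν E)
    (hpsd : ∀ y, (a y).PosSemidef)
    (hmom : ∀ y ∈ E, ∀ n : ℕ, 2 ≤ n → Integrable (fun ξ => ‖ξ‖ ^ n) (ν y))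
    {f : (Fin d → ℝ) → ℝ} {k : ℕ} (hf : ContDiff ℝ k f) (hk : 2 ≤ k) {c : ℝ}
    (hgrowth : ∀ z, |f z| ≤ c * (1 + ‖z‖ ^ k)) (x : Fin d → ℝ) :
    jdOp a b ν f =O[𝓝[E] x] fun _ => (1 : ℝ) := by
  obtain ⟨W, hWc, -, hW⟩ := exists_continuous_abs_jumpIntegrand_le hf hk hgrowth
  exact (diffusionDrift_isBigO_one (hf.of_le (mod_cast hk))
    (hP.diffusion_isBigO_one hpsd · · x) (hP.drift_isBigO_one · x)).add
    (integral_jumpIntegrand_isBigO_one hf.continuous hWc hW (fun y hy => hmom y hy 2 le_rfl)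
      (fun y hy => hmom y hy k hk) (hP.integral_norm_pow_isBigO_one hpsd hmom le_rfl x)
      (hP.integral_norm_pow_isBigO_one hpsd hmom hk x))

end JumpDiffusion

theorem stmt16_general {d : ℕ} (E : Set (Fin d → ℝ))
    (a : (Fin d → ℝ) → Matrix (Fin d) (Fin d) ℝ)
    (b : (Fin d → ℝ) → Fin d → ℝ)
    (ν : (Fin d → ℝ) → Measure (Fin d → ℝ))
    (hpsd : ∀ x, (a x).PosSemidef)
    (hmom : ∀ x ∈ E, ∀ n : ℕ, 2 ≤ n → Integrable (fun ξ => ‖ξ‖ ^ n) (ν x))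
    (hmap : ∀ n : ℕ, ∀ p : MvPolynomial (Fin d) ℝ, p.totalDegree ≤ n →
      ∃ r : MvPolynomial (Fin d) ℝ, r.totalDegree ≤ n ∧
        ∀ x ∈ E, MvPolynomial.eval x r =
          jdOp a b ν (fun y => MvPolynomial.eval y p) x)
    (k : ℕ) (hk : 2 ≤ k)
    (f : (Fin d → ℝ) → ℝ) (hf : ContDiff ℝ (k : ℕ∞) f)
    (c : ℝ) (hgrowth : ∀ x, |f x| ≤ c * (1 + ‖x‖ ^ k)) :
    (∃ M : (Fin d → ℝ) → ℝ, Continuous M ∧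
      ∀ x ξ : Fin d → ℝ,
        |f (x + ξ) - ∑ j ∈ Finset.range k,
            (1 / (j.factorial : ℝ)) * iteratedFDeriv ℝ j f x (fun _ => ξ)| ≤
          ‖ξ‖ ^ k * M x) ∧
    (∀ x ∈ E, Integrable
      (fun ξ => f (x + ξ) - f x - ∑ i, ξ i * fderiv ℝ f x (Pi.single i 1)) (ν x)) ∧
    (∀ x ∈ E, ∃ U ∈ nhds x, ∃ C : ℝ, ∀ y ∈ U ∩ E, |jdOp a b ν f y| ≤ C) := by
  replace hf : ContDiff ℝ k f := mod_cast hf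
  have hP : MapsPolynomialsOn a b ν E := fun p => (hmap _ p le_rfl).imp fun _ hr => hr.2
  obtain ⟨M, hMc, -, hM⟩ := exists_continuous_abs_sub_taylorPoly_le hf (by omega) le_rfl hgrowth
  obtain ⟨W, -, -, hW⟩ := exists_continuous_abs_jumpIntegrand_le hf hk hgrowth
  refine ⟨⟨fun x => 2 * M x, by fun_prop, fun x ξ => (hM x ξ).trans_eq (by ring)⟩,
    fun x hx => integrable_jumpIntegrand hf.continuous hW (hmom x hx 2 le_rfl) (hmom x hx k hk) x,
    fun x _ => exists_mem_nhds_forall_abs_le_of_isBigO_one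
      (hP.jdOp_isBigO_one hpsd hmom hf hk hgrowth x)⟩

/-- if `𝒢` is polynomial on `E` and `f ∈ C^k(ℝ^d)` has growth
`|f(x)| ≤ c(1+‖x‖^k)` for some `k ≥ 2`, then the Taylor remainder of order `k−1`
satisfies `|g(x,ξ)| ≤ ‖ξ‖^k M(x)` for a continuous `M`, the jump integrand of `𝒢f`
is integrable, and `𝒢f` is locally bounded on `E`. -/
theorem stmt16 {d : ℕ} (E : Set (Fin d → ℝ))
    (a : (Fin d → ℝ) → Matrix (Fin d) (Fin d) ℝ)
    (b : (Fin d → ℝ) → Fin d → ℝ)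
    (ν : (Fin d → ℝ) → Measure (Fin d → ℝ))
    (hpsd : ∀ x, (a x).PosSemidef)
    (hν0 : ∀ x, ν x ({0} : Set (Fin d → ℝ)) = 0)
    (hmom : ∀ x ∈ E, ∀ n : ℕ, 2 ≤ n → Integrable (fun ξ => ‖ξ‖ ^ n) (ν x))
    (hvanish : ∀ p : MvPolynomial (Fin d) ℝ, (∀ x ∈ E, MvPolynomial.eval x p = 0) →
      ∀ x ∈ E, jdOp a b ν (fun y => MvPolynomial.eval y p) x = 0)
    (hmap : ∀ n : ℕ, ∀ p : MvPolynomial (Fin d) ℝ, p.totalDegree ≤ n →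
      ∃ r : MvPolynomial (Fin d) ℝ, r.totalDegree ≤ n ∧
        ∀ x ∈ E, MvPolynomial.eval x r =
          jdOp a b ν (fun y => MvPolynomial.eval y p) x)
    (k : ℕ) (hk : 2 ≤ k)
    (f : (Fin d → ℝ) → ℝ) (hf : ContDiff ℝ (k : ℕ∞) f)
    (c : ℝ) (hgrowth : ∀ x, |f x| ≤ c * (1 + ‖x‖ ^ k)) :
    (∃ M : (Fin d → ℝ) → ℝ, Continuous M ∧
      ∀ x ξ : Fin d → ℝ,
        |f (x + ξ) - ∑ j ∈ Finset.range k,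
            (1 / (j.factorial : ℝ)) * iteratedFDeriv ℝ j f x (fun _ => ξ)| ≤
          ‖ξ‖ ^ k * M x) ∧
    (∀ x ∈ E, Integrable
      (fun ξ => f (x + ξ) - f x - ∑ i, ξ i * fderiv ℝ f x (Pi.single i 1)) (ν x)) ∧
    (∀ x ∈ E, ∃ U ∈ nhds x, ∃ C : ℝ, ∀ y ∈ U ∩ E, |jdOp a b ν f y| ≤ C) :=
  stmt16_general E a b ν hpsd hmom hmap k hk f hf c hgrowth

end
end
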